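/- arXiv:2009.10805 — 6 statements merged into one kernel-verified Lean document; each statement's English description precedes it below -/
import Mathlib

section
/- Let A and G be abelian groups and let c : A × A → G be a normalized symmetric 2-cocycle. Extend c to tuples by setting c(x) = 0 for a single element x ∈ A and recursively c(x_1,…,x_n,x_{n+1}) = c(x_1,…,x_n) + c(x_1+⋯+x_n, x_{n+1}) for n ≥ 1. Then for every n ≥ 1 the resulting function A^n → G is invariant under permutations of its arguments, and for all n, m ≥ 1 and all x_1,…,x_n, y_1,…,y_m ∈ A one has c(x_1,…,x_n,y_1,…,y_m) = c(x_1,…,x_n) + c(y_1,…,y_m) + c(x_1+⋯+x_n, y_1+⋯+y_m). -/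
/-!
Statement 0: Eilenberg–Mac Lane extension of a normalized symmetric 2-cocycle to tuples:
permutation invariance and the additivity formula.

A tuple `(x₁, …, xₙ)` is represented by the list `[x₁, …, xₙ]`.  The extension is
characterized by `c(x) = 0` for a single element and
`c(x₁,…,xₙ,x_{n+1}) = c(x₁,…,xₙ) + c(x₁+⋯+xₙ, x_{n+1})`.
-/

/-- Auxiliary recursion with accumulator: `cextAux c s [x₁,…,xₙ] = Σ_{k} c(s + x₁ + ⋯ + x_{k-1}, x_k)`. -/
def cextAux {A G : Type*} [AddCommGroup A] [AddCommGroup G] (c : A → A → G) : A → List A → G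
  | _, [] => 0
  | s, x :: xs => c s x + cextAux c (s + x) xs

/-- The extension of a 2-cocycle `c` to tuples, with `cext c [x] = 0` and
`cext c (l ++ [y]) = cext c l + c (l.sum) y`. -/
def cext {A G : Type*} [AddCommGroup A] [AddCommGroup G] (c : A → A → G) : List A → G
  | [] => 0
  | x :: xs => cextAux c x xs

/-!
Write `c_s(x₁,…,xₙ) = Σₖ c(s + x₁ + ⋯ + x_{k-1}, x_k)`, so that `cext c (x :: l) = c_x(l)`, and,
as `c(0, x) = 0`, also `cext c l = c_0(l)`. The cocycle identity with first argument `s` says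
precisely that `c_s` is unchanged by swapping two adjacent entries, hence `c_0` is invariant under
permutations. Splitting `c_0(l₁ ++ l₂) = c_0(l₁) + c_{Σ l₁}(l₂) = cext c l₁ + cext c (Σ l₁ :: l₂)`
and moving `Σ l₁` to the end of the last tuple by a permutation gives additivity.
-/

section

variable {A G : Type*} [AddCommGroup A] [AddCommGroup G] (c : A → A → G)

lemma cextAux_eq_cext_cons (s : A) (l : List A) : cextAux c s l = cext c (s :: l) := rfl

lemma cextAux_append (s : A) (l₁ l₂ : List A) :
    cextAux c s (l₁ ++ l₂) = cextAux c s l₁ + cextAux c (s + l₁.sum) l₂ := by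
  induction l₁ generalizing s with
  | nil => simp [cextAux]
  | cons x xs ih => simp only [List.cons_append, cextAux, ih, List.sum_cons, add_assoc]

lemma cextAux_perm (hcoc : ∀ x y z : A, c x y + c (x + y) z = c x z + c (x + z) y)
    {l l' : List A} (hp : l.Perm l') (s : A) : cextAux c s l = cextAux c s l' := by
  induction hp generalizing s with
  | nil => rfl
  | cons x _ ih => simp only [cextAux, ih]
  | swap x y l =>
    simp only [cextAux, ← add_assoc]
    rw [add_right_comm s y x, hcoc s y x]
  | trans _ _ ih₁ ih₂ => rw [ih₁, ih₂]

variable {c}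

lemma cext_eq_cextAux_zero (h0 : ∀ x : A, c 0 x = 0) (l : List A) : cext c l = cextAux c 0 l := by
  cases l with
  | nil => rfl
  | cons x xs => simp [cext, cextAux, h0]

lemma cext_perm (h0 : ∀ x : A, c 0 x = 0)
    (hcoc : ∀ x y z : A, c x y + c (x + y) z = c x z + c (x + z) y)
    {l l' : List A} (hp : l.Perm l') : cext c l = cext c l' := by
  rw [cext_eq_cextAux_zero h0, cext_eq_cextAux_zero h0, cextAux_perm c hcoc hp]

lemma cext_append_singleton (h0 : ∀ x : A, c 0 x = 0) (l : List A) (y : A) :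
    cext c (l ++ [y]) = cext c l + c l.sum y := by
  simp [cext_eq_cextAux_zero h0, cextAux_append, cextAux]

lemma cext_cons (h0 : ∀ x : A, c 0 x = 0)
    (hcoc : ∀ x y z : A, c x y + c (x + y) z = c x z + c (x + z) y) (a : A) (l : List A) :
    cext c (a :: l) = cext c l + c l.sum a := by
  rw [cext_perm h0 hcoc (List.perm_append_singleton a l).symm, cext_append_singleton h0]

lemma cext_append (h0 : ∀ x : A, c 0 x = 0)
    (hcoc : ∀ x y z : A, c x y + c (x + y) z = c x z + c (x + z) y) (l₁ l₂ : List A) :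
    cext c (l₁ ++ l₂) = cext c l₁ + cext c l₂ + c l₂.sum l₁.sum := by
  rw [cext_eq_cextAux_zero h0, cextAux_append, zero_add, ← cext_eq_cextAux_zero h0,
    cextAux_eq_cext_cons, cext_cons h0 hcoc, add_assoc]

end

theorem cocycle_tuple_extension_perm_invariant_and_additive
    {A G : Type*} [AddCommGroup A] [AddCommGroup G]
    (c : A → A → G)
    (hnorm : ∀ x : A, c x 0 = 0)
    (hsymm : ∀ x y : A, c x y = c y x)
    (hcoc : ∀ x y z : A, c x y + c (x + y) z = c x z + c (x + z) y) :
    (∀ l l' : List A, l.Perm l' → cext c l = cext c l') ∧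
    (∀ l₁ l₂ : List A, l₁ ≠ [] → l₂ ≠ [] →
      cext c (l₁ ++ l₂) = cext c l₁ + cext c l₂ + c l₁.sum l₂.sum) := by
  have h0 : ∀ x : A, c 0 x = 0 := fun x => by rw [hsymm, hnorm]
  refine ⟨fun l l' hp => cext_perm h0 hcoc hp, fun l₁ l₂ _ _ => ?_⟩
  rw [cext_append h0 hcoc, hsymm]
end

section
/- Let G be a Polish abelian group with the division closure property, let F be a countable free abelian group, and let R be a subgroup of F. Then Hom_f(F|R,G), the subgroup of Hom(R,G) consisting of those homomorphisms φ : R → G that extend to a group homomorphism F_0 → G for every subgroup F_0 with R ≤ F_0 ≤ F and F_0/R finite, is a closed subgroup of Hom(R,G), and it equals the closure in Hom(R,G) of the subgroup Hom(F|R,G) of homomorphisms R → G that extend to a group homomorphism F → G. -/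
/-!
A homomorphism `φ : R → G` lies in `Hom_f(F|R,G)` exactly when `φ(R ∩ mF) ⊆ mG` for every
`m ≠ 0`. Necessity: extend `φ` to `R + ℤx`. Sufficiency: a subgroup `F₀` with `F₀/R` finite lies
in `R + P` for a finitely generated `P`; a Smith normal form basis of `P` adapted to `P ∩ R`
lets one divide the values of `φ` coordinatewise, which extends `φ|(P ∩ R)` to `P`, and this
glues with `φ` on `R`. The divisibility conditions are closed by the division closure property.
Finitely many points of `R` lie in a finite coordinate summand `V` of `F`; extending `φ|(V ∩ R)`
to `V` and composing with the projection `F → V` gives an element of `Hom(F|R,G)` agreeing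
with `φ` at those points, so `Hom_f(F|R,G)` lies in the closure of `Hom(F|R,G)`.
-/

section

variable {F G : Type*} [AddCommGroup F] [AddCommGroup G]

-- `φ (R ∩ m • F) ⊆ m • G` for every `m ≠ 0`
def PreservesDivisibility (R : AddSubgroup F) (φ : R → G) : Prop :=
  ∀ (m : ℤ) (x : F) (h : m • x ∈ R), m ≠ 0 → ∃ g : G, m • g = φ ⟨m • x, h⟩

-- `φ ∈ Hom_f(F|R,G)`
def ExtendsOverFiniteQuotients (R : AddSubgroup F) (φ : R → G) : Prop :=
  ∀ (F₀ : AddSubgroup F) (hle : R ≤ F₀),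
    ((fun x : F => (QuotientAddGroup.mk x : F ⧸ R)) '' (F₀ : Set F)).Finite →
    ∃ ψ : ↥F₀ →+ G, ∀ r : ↥R, ψ (AddSubgroup.inclusion hle r) = φ r

theorem preservesDivisibility_of_extendsOverFiniteQuotients {R : AddSubgroup F} {φ : R → G}
    (hφ : ExtendsOverFiniteQuotients R φ) : PreservesDivisibility R φ := by
  intro m x h hm
  let F₀ := R ⊔ AddSubgroup.zmultiples x
  have hfin : ((fun x : F => (QuotientAddGroup.mk x : F ⧸ R)) '' (F₀ : Set F)).Finite := by
    have hx : IsOfFinAddOrder (x : F ⧸ R) :=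
      isOfFinAddOrder_iff_zsmul_eq_zero.2 ⟨m, hm, (QuotientAddGroup.eq_zero_iff _).2 h⟩
    convert hx.finite_zmultiples
    rw [← QuotientAddGroup.coe_mk', ← AddSubgroup.coe_map, AddSubgroup.map_sup,
      QuotientAddGroup.map_mk'_self, bot_sup_eq, AddMonoidHom.map_zmultiples]
  obtain ⟨ψ, hψ⟩ := hφ F₀ le_sup_left hfin
  let x₀ : F₀ := ⟨x, AddSubgroup.mem_sup_right (AddSubgroup.mem_zmultiples x)⟩
  refine ⟨ψ x₀, ?_⟩
  rw [← map_zsmul, ← hψ]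
  rfl

theorem exists_extend_of_preservesDivisibility {M : Type*} [AddCommGroup M] [Module.Free ℤ M]
    [Module.Finite ℤ M] {N : AddSubgroup M} {Φ : N →+ G} (hΦ : PreservesDivisibility N Φ) :
    ∃ θ : M →+ G, ∀ n : N, θ n = Φ n := by
  classical
  obtain ⟨k, snf⟩ := (AddSubgroup.toIntSubmodule N).smithNormalForm (Module.Free.chooseBasis ℤ M)
  have ha : ∀ j, snf.a j ≠ 0 := fun j h =>
    snf.bN.ne_zero j (Subtype.ext (by simp [snf.snf j, h]))
  have hdiv : ∀ j, ∃ g : G, snf.a j • g = Φ (snf.bN j) := fun j => by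
    obtain ⟨g, hg⟩ := hΦ (snf.a j) (snf.bM (snf.f j)) (snf.snf j ▸ (snf.bN j).2) (ha j)
    exact ⟨g, hg.trans (congrArg Φ (Subtype.ext (snf.snf j).symm))⟩
  choose g hg using hdiv
  let θ := snf.bM.constr ℤ (Function.extend snf.f g 0)
  have hθ : θ ∘ₗ (AddSubgroup.toIntSubmodule N).subtype = Φ.toIntLinearMap :=
    snf.bN.ext fun j => by
      show θ (snf.bN j) = Φ (snf.bN j)
      rw [snf.snf j, map_smul, Module.Basis.constr_basis, snf.f.injective.extend_apply, hg]
  exact ⟨θ.toAddMonoidHom, LinearMap.congr_fun hθ⟩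

theorem exists_extend_comp_of_preservesDivisibility {M : Type*} [AddCommGroup M]
    [Module.Free ℤ M] [Module.Finite ℤ M] (e : M →+ F) {R : AddSubgroup F} {φ : R →+ G}
    (hφ : PreservesDivisibility R φ) :
    ∃ θ : M →+ G, ∀ (v : M) (hv : e v ∈ R), θ v = φ ⟨e v, hv⟩ := by
  have hΦ : PreservesDivisibility (R.comap e) (φ.comp (e.addSubgroupComap R)) :=
    fun m x h hm => by
      obtain ⟨g, hg⟩ := hφ m (e x) (by simpa using h) hm
      exact ⟨g, hg.trans (congrArg φ (Subtype.ext (map_zsmul e m x).symm))⟩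
  obtain ⟨θ, hθ⟩ := exists_extend_of_preservesDivisibility hΦ
  exact ⟨θ, fun v hv => hθ ⟨v, hv⟩⟩

theorem exists_extend_sup_fg_of_preservesDivisibility [Module.IsTorsionFree ℤ F]
    {R : AddSubgroup F} {φ : R →+ G} (hφ : PreservesDivisibility R φ) {P : Submodule ℤ F}
    (hP : P.FG) :
    ∃ ψ : ↥(AddSubgroup.toIntSubmodule R ⊔ P) →ₗ[ℤ] G,
      ∀ r : R, ψ ⟨r, Submodule.mem_sup_left r.2⟩ = φ r := by
  have : Module.Finite ℤ P := Module.Finite.iff_fg.mpr hP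
  obtain ⟨θ, hθ⟩ := exists_extend_comp_of_preservesDivisibility P.subtype.toAddMonoidHom hφ
  let f : F →ₗ.[ℤ] G := ⟨AddSubgroup.toIntSubmodule R, φ.toIntLinearMap⟩
  let g : F →ₗ.[ℤ] G := ⟨P, θ.toIntLinearMap⟩
  have hfg : ∀ (x : f.domain) (y : g.domain), (x : F) = y → f x = g y := by
    rintro ⟨x, hx⟩ ⟨y, hy⟩ (rfl : x = y)
    exact (hθ ⟨x, hy⟩ hx).symm
  exact ⟨(f.sup g hfg).toFun, fun r => ((f.left_le_sup g hfg).2 (x := ⟨r, r.2⟩) rfl).symm⟩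

theorem exists_fg_le_sup_of_finite_image {R F₀ : AddSubgroup F}
    (hfin : ((fun x : F => (QuotientAddGroup.mk x : F ⧸ R)) '' (F₀ : Set F)).Finite) :
    ∃ P : Submodule ℤ F, P.FG ∧
      AddSubgroup.toIntSubmodule F₀ ≤ AddSubgroup.toIntSubmodule R ⊔ P := by
  have hrep : ∀ q : (QuotientAddGroup.mk '' (F₀ : Set F) : Set (F ⧸ R)),
      ∃ z ∈ F₀, (z : F ⧸ R) = q := fun ⟨_, z, hz, rfl⟩ => ⟨z, hz, rfl⟩
  choose z hzF₀ hz using hrep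
  have : Finite (QuotientAddGroup.mk '' (F₀ : Set F) : Set (F ⧸ R)) := hfin.to_subtype
  refine ⟨Submodule.span ℤ (Set.range z), Submodule.fg_span (Set.finite_range z), fun x hx => ?_⟩
  let q : (QuotientAddGroup.mk '' (F₀ : Set F) : Set (F ⧸ R)) := ⟨x, x, hx, rfl⟩
  refine Submodule.mem_sup.2 ⟨x - z q, ?_, z q, Submodule.subset_span ⟨q, rfl⟩, sub_add_cancel _ _⟩
  exact (QuotientAddGroup.eq_iff_sub_mem).1 (hz q).symm

theorem extendsOverFiniteQuotients_of_preservesDivisibility [Module.IsTorsionFree ℤ F]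
    {R : AddSubgroup F} {φ : R →+ G} (hφ : PreservesDivisibility R φ) :
    ExtendsOverFiniteQuotients R φ := by
  intro F₀ hle hfin
  obtain ⟨P, hP, hF₀⟩ := exists_fg_le_sup_of_finite_image hfin
  obtain ⟨ψ, hψ⟩ := exists_extend_sup_fg_of_preservesDivisibility hφ hP
  exact ⟨(ψ ∘ₗ Submodule.inclusion hF₀).toAddMonoidHom, hψ⟩

theorem exists_eqOn_finset_of_preservesDivisibility [Module.Free ℤ F] {R : AddSubgroup F}
    {φ : R →+ G} (hφ : PreservesDivisibility R φ) (I : Finset R) :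
    ∃ Ψ : F →+ G, ∀ r ∈ I, Ψ r = φ r := by
  classical
  let b := Module.Free.chooseBasis ℤ F
  let J : Set (Module.Free.ChooseBasisIndex ℤ F) := ↑(I.biUnion fun r => (b.repr r).support)
  let S := Finsupp.supported ℤ ℤ J
  have : Module.Free ℤ S := Module.Free.of_equiv (Finsupp.supportedEquivFinsupp J).symm
  have : Module.Finite ℤ S := Module.Finite.equiv (Finsupp.supportedEquivFinsupp J).symm
  obtain ⟨θ, hθ⟩ :=
    exists_extend_comp_of_preservesDivisibility
      (b.repr.symm.toLinearMap ∘ₗ S.subtype).toAddMonoidHom hφ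
  refine ⟨θ.comp (Finsupp.restrictDom ℤ ℤ J ∘ₗ b.repr.toLinearMap).toAddMonoidHom, fun r hr => ?_⟩
  have hrS : b.repr r ∈ S := (Finsupp.mem_supported _ _).2 <| by
    exact_mod_cast Finset.subset_biUnion_of_mem (fun r : R => (b.repr r).support) hr
  have hres : Finsupp.restrictDom ℤ ℤ J (b.repr r) = ⟨b.repr r, hrS⟩ :=
    LinearMap.congr_fun (Finsupp.restrictDom_comp_subtype J) ⟨_, hrS⟩
  simpa [hres] using hθ ⟨b.repr r, hrS⟩ (by simp)

theorem isClosed_setOf_exists_zsmul_eq [TopologicalSpace G]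
    (hdcp : ∀ k : ℕ, 0 < k → IsClosed {g : G | ∃ x : G, k • x = g}) {m : ℤ} (hm : m ≠ 0) :
    IsClosed {g : G | ∃ x : G, m • x = g} := by
  obtain ⟨n, rfl | rfl⟩ := Int.eq_nat_or_neg m
  · simpa only [natCast_zsmul] using hdcp n (by omega)
  · convert hdcp n (by omega) using 1
    ext g
    exact ⟨fun ⟨x, hx⟩ => ⟨-x, by simpa using hx⟩, fun ⟨x, hx⟩ => ⟨-x, by simpa using hx⟩⟩

theorem isClosed_setOf_preservesDivisibility [TopologicalSpace G]
    (hdcp : ∀ k : ℕ, 0 < k → IsClosed {g : G | ∃ x : G, k • x = g}) (R : AddSubgroup F) :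
    IsClosed {φ : R → G | PreservesDivisibility R φ} := by
  simp only [PreservesDivisibility, Set.ofPred_forall]
  exact isClosed_iInter fun m => isClosed_iInter fun x => isClosed_iInter fun h =>
    isClosed_iInter fun hm =>
      IsClosed.preimage (continuous_apply _ : Continuous fun φ : R → G => φ ⟨m • x, h⟩)
        (isClosed_setOf_exists_zsmul_eq hdcp hm)

end

theorem mem_closure_of_forall_finset_exists_eqOn {ι : Type*} {X : ι → Type*}
    [∀ i, TopologicalSpace (X i)] {S : Set (∀ i, X i)} {f : ∀ i, X i}
    (h : ∀ I : Finset ι, ∃ g ∈ S, ∀ i ∈ I, g i = f i) : f ∈ closure S := by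
  refine mem_closure_iff.2 fun U hU hfU => ?_
  obtain ⟨I, u, hu, hIU⟩ := isOpen_pi_iff.1 hU f hfU
  obtain ⟨g, hgS, hgf⟩ := h I
  exact ⟨g, hIU fun i hi => hgf i hi ▸ (hu i hi).2, hgS⟩

theorem homf_is_closed_and_is_closure_of_hom_general
    {G : Type*} [AddCommGroup G] [TopologicalSpace G]
    (hdcp : ∀ k : ℕ, 0 < k → IsClosed {g : G | ∃ x : G, k • x = g})
    {F : Type*} [AddCommGroup F] [Module.Free ℤ F]
    (R : AddSubgroup F) :
    IsClosed {φ : {f : ↥R → G // ∀ a b : ↥R, f (a + b) = f a + f b} |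
        ∀ (F₀ : AddSubgroup F) (hle : R ≤ F₀),
          ((fun x : F => (QuotientAddGroup.mk x : F ⧸ R)) '' (F₀ : Set F)).Finite →
          ∃ ψ : ↥F₀ →+ G, ∀ r : ↥R, ψ (AddSubgroup.inclusion hle r) = φ.1 r} ∧
    {φ : {f : ↥R → G // ∀ a b : ↥R, f (a + b) = f a + f b} |
        ∀ (F₀ : AddSubgroup F) (hle : R ≤ F₀),
          ((fun x : F => (QuotientAddGroup.mk x : F ⧸ R)) '' (F₀ : Set F)).Finite →
          ∃ ψ : ↥F₀ →+ G, ∀ r : ↥R, ψ (AddSubgroup.inclusion hle r) = φ.1 r}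
      = closure {φ : {f : ↥R → G // ∀ a b : ↥R, f (a + b) = f a + f b} |
          ∃ ψ : F →+ G, ∀ r : ↥R, ψ ↑r = φ.1 r} := by
  have hclosed : IsClosed {φ : {f : ↥R → G // ∀ a b : ↥R, f (a + b) = f a + f b} |
      ExtendsOverFiniteQuotients R φ.1} := by
    convert IsClosed.preimage continuous_subtype_val (isClosed_setOf_preservesDivisibility hdcp R)
      using 1
    ext φ
    exact ⟨preservesDivisibility_of_extendsOverFiniteQuotients,
      extendsOverFiniteQuotients_of_preservesDivisibility (φ := AddMonoidHom.mk' φ.1 φ.2)⟩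
  refine ⟨hclosed, subset_antisymm (fun φ hφ => ?_) (closure_minimal ?_ hclosed)⟩
  · rw [closure_subtype]
    refine mem_closure_of_forall_finset_exists_eqOn fun I => ?_
    obtain ⟨Ψ, hΨ⟩ := exists_eqOn_finset_of_preservesDivisibility (φ := AddMonoidHom.mk' φ.1 φ.2)
      (preservesDivisibility_of_extendsOverFiniteQuotients hφ) I
    exact ⟨_, ⟨⟨fun r => Ψ r, fun a b => by simp⟩, ⟨Ψ, fun r => rfl⟩, rfl⟩, hΨ⟩
  · rintro φ ⟨ψ, hψ⟩ F₀ hle -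
    exact ⟨ψ.comp F₀.subtype, hψ⟩

theorem homf_is_closed_and_is_closure_of_hom
    {G : Type*} [AddCommGroup G] [TopologicalSpace G] [IsTopologicalAddGroup G]
    [PolishSpace G]
    (hdcp : ∀ k : ℕ, 0 < k → IsClosed {g : G | ∃ x : G, k • x = g})
    {F : Type*} [AddCommGroup F] [Countable F] [Module.Free ℤ F]
    (R : AddSubgroup F) :
    IsClosed {φ : {f : ↥R → G // ∀ a b : ↥R, f (a + b) = f a + f b} |
        ∀ (F₀ : AddSubgroup F) (hle : R ≤ F₀),
          ((fun x : F => (QuotientAddGroup.mk x : F ⧸ R)) '' (F₀ : Set F)).Finite →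
          ∃ ψ : ↥F₀ →+ G, ∀ r : ↥R, ψ (AddSubgroup.inclusion hle r) = φ.1 r} ∧
    {φ : {f : ↥R → G // ∀ a b : ↥R, f (a + b) = f a + f b} |
        ∀ (F₀ : AddSubgroup F) (hle : R ≤ F₀),
          ((fun x : F => (QuotientAddGroup.mk x : F ⧸ R)) '' (F₀ : Set F)).Finite →
          ∃ ψ : ↥F₀ →+ G, ∀ r : ↥R, ψ (AddSubgroup.inclusion hle r) = φ.1 r}
      = closure {φ : {f : ↥R → G // ∀ a b : ↥R, f (a + b) = f a + f b} |
          ∃ ψ : F →+ G, ∀ r : ↥R, ψ ↑r = φ.1 r} :=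
  homf_is_closed_and_is_closure_of_hom_general hdcp R
end

section
/- Let G be a Polish abelian group with the division closure property, A a cochain complex of countable free abelian groups, and A* its G-dual Polish chain complex. For each n ∈ ℤ, the rule Index([z])([a]) = z(a), for z ∈ Z_n(A*) and a ∈ Z^n(A), gives a well-defined group homomorphism Index : H_n(A*) → Hom(H^n(A),G), whose kernel equals °H_n(A*) = Ann(Z^n(A))/B_n(A*). Moreover, Index is a split epimorphism: for any group-homomorphism retraction i† : A^n → Z^n(A) of the inclusion Z^n(A) ↪ A^n (which exists since B^{n+1}(A) is free abelian), the map Hom(H^n(A),G) → Z_n(A*), φ ↦ φ ∘ p^n ∘ i† (where p^n : Z^n(A) → H^n(A) is the quotient map), is continuous, takes values in Z_n(A*), and induces a right inverse of Index. -/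
/-!
`Index([z])([a]) = z(a)` is well defined because a cycle `z` of `A*` vanishes on coboundaries
of `A` and a boundary of `A*` vanishes on cocycles of `A`; its kernel is then visibly the
annihilator of the cocycles. Conversely `φ ∘ p ∘ r` vanishes on coboundaries, since `r` fixes
cocycles and `p` kills coboundaries, so it is a cycle of `A*`, and on cocycles it restricts to
`φ ∘ p`: this splits `Index`. Continuity is coordinatewise evaluation.

The retraction `r : A^n → Z^n(A)` exists because `A^n / Z^n(A) ≅ B^{n+1}(A)` is projective: it
is a subgroup of the countable free group `A^{n+1}`, and every submodule of `R^(ℕ)` over a PID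
`R` is free, with an echelon basis whose pivots generate the (principal) ideals of leading
coefficients.

Paper degree `n` is Lean degree `n + 1`: `Z^{n+1}(A) = ker (δ (n + 1))`,
`B^{n+1}(A) = range (δ n)`, `Z_{n+1}(A*) = ker (precompHom G (δ n))` and
`B_{n+1}(A*) = range (precompHom G (δ (n + 1)))`.
-/

def precompHom (G : Type*) [AddCommGroup G] {X Y : Type*} [AddCommGroup X] [AddCommGroup Y]
    (f : X →+ Y) : (Y →+ G) →+ (X →+ G) where
  toFun g := g.comp f
  map_zero' := rfl
  map_add' _ _ := rfl

open Submodule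

theorem linearIndependent_of_triangular {R ι M : Type*} [Ring R] [NoZeroDivisors R]
    [LinearOrder ι] [AddCommGroup M] [Module R M] {v : ι → M} (f : ι → M →ₗ[R] R)
    (hdiag : ∀ i, f i (v i) ≠ 0) (hlt : ∀ i j, i < j → f j (v i) = 0) :
    LinearIndependent R v := by
  classical
  rw [linearIndependent_iff']
  intro s g hsum i hi
  by_contra hgi
  set t := s.filter (fun i => g i ≠ 0)
  have ht : t.Nonempty := ⟨i, Finset.mem_filter.mpr ⟨hi, hgi⟩⟩
  set i₀ := t.max' ht
  obtain ⟨hi₀s, hgi₀⟩ := Finset.mem_filter.mp (t.max'_mem ht)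
  have hlead : f i₀ (∑ j ∈ s, g j • v j) = g i₀ * f i₀ (v i₀) := by
    rw [map_sum, Finset.sum_eq_single_of_mem i₀ hi₀s]
    · simp
    · intro j hj hji
      by_cases hgj : g j = 0
      · simp [hgj]
      · have hj₀ : j < i₀ := lt_of_le_of_ne (t.le_max' j (Finset.mem_filter.mpr ⟨hj, hgj⟩)) hji
        simp [hlt j i₀ hj₀]
  rw [hsum, map_zero] at hlead
  exact mul_ne_zero hgi₀ (hdiag i₀) hlead.symm

theorem Finsupp.mem_supported_Iio_of_apply_eq_zero {R : Type*} [Semiring R] {k : ℕ}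
    {x : ℕ →₀ R} (hx : x ∈ Finsupp.supported R R (Set.Iic k)) (hxk : x k = 0) :
    x ∈ Finsupp.supported R R (Set.Iio k) := by
  rw [Finsupp.mem_supported'] at hx ⊢
  intro j hj
  rcases (not_lt.mp (Set.mem_Iio.not.mp hj)).eq_or_lt with rfl | hkj
  · exact hxk
  · exact hx j (not_le.mpr hkj)

section PID

variable {R : Type*} [CommRing R] [IsPrincipalIdealRing R]

theorem Submodule.exists_pivot_finsupp_nat (N : Submodule R (ℕ →₀ R)) (k : ℕ) :
    ∃ y ∈ N ⊓ Finsupp.supported R R (Set.Iic k),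
      ∀ x ∈ N ⊓ Finsupp.supported R R (Set.Iic k), y k ∣ x k := by
  let I : Ideal R := (N ⊓ Finsupp.supported R R (Set.Iic k)).map (Finsupp.lapply k)
  obtain ⟨y, hy, hyk⟩ := Submodule.mem_map.mp (IsPrincipal.generator_mem I)
  refine ⟨y, hy, fun x hx => ?_⟩
  rw [show y k = IsPrincipal.generator I from hyk, ← IsPrincipal.mem_iff_generator_dvd]
  exact Submodule.mem_map_of_mem hx

theorem Submodule.free_of_finsupp_nat [IsDomain R] (N : Submodule R (ℕ →₀ R)) :
    Module.Free R N := by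
  choose y hy hdvd using N.exists_pivot_finsupp_nat
  have hyN k : y k ∈ N := (hy k).1
  have hy_gt {k j : ℕ} (h : k < j) : y k j = 0 :=
    (Finsupp.mem_supported' R _).mp (hy k).2 j (not_le.mpr h)
  let v : {k // y k k ≠ 0} → ℕ →₀ R := fun i => y i
  have hli : LinearIndependent R v :=
    linearIndependent_of_triangular (fun i => Finsupp.lapply i.1) (fun i => i.2)
      (fun i j hij => hy_gt (show i.1 < j.1 from hij))
  have hspan_below (k : ℕ) : ∀ x ∈ N ⊓ Finsupp.supported R R (Set.Iio k),
      x ∈ span R (Set.range v) := by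
    induction k with
    | zero =>
      intro x hx
      have hx0 : x = 0 := by
        ext j
        exact (Finsupp.mem_supported' R x).mp hx.2 j (Nat.not_lt_zero j)
      rw [hx0]
      exact zero_mem _
    | succ k ih =>
      intro x ⟨hxN, hx⟩
      rw [Set.Iio_add_one_eq_Iic] at hx
      obtain ⟨c, hc⟩ := hdvd k x ⟨hxN, hx⟩
      have hyk : y k ∈ span R (Set.range v) := by
        by_cases hkk : y k k = 0
        · exact ih (y k) ⟨hyN k, Finsupp.mem_supported_Iio_of_apply_eq_zero (hy k).2 hkk⟩
        · exact subset_span ⟨⟨k, hkk⟩, rfl⟩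
      have hrest : x - c • y k ∈ span R (Set.range v) := by
        refine ih _ ⟨sub_mem hxN (smul_mem _ c (hyN k)), ?_⟩
        refine Finsupp.mem_supported_Iio_of_apply_eq_zero
          (sub_mem hx (smul_mem _ c (hy k).2)) ?_
        simp [hc, mul_comm]
      simpa using add_mem hrest (smul_mem _ c hyk)
  have hspan : span R (Set.range v) = N := by
    refine le_antisymm (span_le.mpr (Set.range_subset_iff.mpr fun i => hyN i)) fun x hx => ?_
    obtain ⟨k, hk⟩ := x.support.exists_nat_subset_range
    refine hspan_below k x ⟨hx, (Finsupp.mem_supported R x).mpr ?_⟩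
    intro j hj
    exact Finset.mem_range.mp (hk hj)
  have := Module.Free.of_basis (Module.Basis.span hli)
  exact Module.Free.of_equiv (LinearEquiv.ofEq _ _ hspan)

variable {M : Type*} [AddCommGroup M] [Module R M]

theorem Submodule.free_of_countable_basis [IsDomain R] {ι : Type*} [Countable ι]
    (b : Module.Basis ι R M) (N : Submodule R M) : Module.Free R N := by
  obtain ⟨e, he⟩ := exists_injective_nat ι
  let J : M →ₗ[R] ℕ →₀ R := Finsupp.lmapDomain R R e ∘ₗ b.repr.toLinearMap
  have hJ : Function.Injective J := (Finsupp.mapDomain_injective he).comp b.repr.injective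
  have := (N.map J).free_of_finsupp_nat
  exact Module.Free.of_equiv (N.equivMapOfInjective J hJ).symm

end PID

theorem LinearMap.exists_retraction_ker {R M N : Type*} [Ring R] [AddCommGroup M]
    [AddCommGroup N] [Module R M] [Module R N] (f : M →ₗ[R] N)
    [Module.Projective R (range f)] : ∃ r : M →ₗ[R] ker f, r ∘ₗ (ker f).subtype = id := by
  obtain ⟨s, hs⟩ := f.rangeRestrict.exists_rightInverse_of_surjective f.range_rangeRestrict
  have hexact : Function.Exact (ker f).subtype f.rangeRestrict := fun x => by
    simp [Subtype.ext_iff]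
  have hsplit := (hexact.split_tfae (ker f).injective_subtype f.surjective_rangeRestrict).out 0 1
  exact hsplit.mp ⟨s, hs⟩

theorem AddMonoidHom.exists_retraction_ker {X Y : Type*} [AddCommGroup X] [AddCommGroup Y]
    [Countable Y] [Module.Free ℤ Y] (f : X →+ Y) : ∃ r : X →+ f.ker, ∀ a : f.ker, r a = a := by
  let b := Module.Free.chooseBasis ℤ Y
  have : Countable (Module.Free.ChooseBasisIndex ℤ Y) := b.injective.countable
  have := (LinearMap.range f.toIntLinearMap).free_of_countable_basis b
  obtain ⟨r, hr⟩ := f.toIntLinearMap.exists_retraction_ker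
  exact ⟨r.toAddMonoidHom, fun a => LinearMap.congr_fun hr a⟩

abbrev homologyAt {X Y W : Type*} [AddCommGroup X] [AddCommGroup Y] [AddCommGroup W]
    (f : X →+ Y) (g : Y →+ W) : Type _ :=
  g.ker ⧸ f.range.addSubgroupOf g.ker

section Index

variable {G X Y W : Type*} [AddCommGroup G] [AddCommGroup X] [AddCommGroup Y] [AddCommGroup W]
  (f : X →+ Y) (g : Y →+ W)

def restrictCycle (z : (precompHom G f).ker) : homologyAt f g →+ G :=
  QuotientAddGroup.lift _ (z.1.comp g.ker.subtype) fun a ⟨x, hx⟩ => by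
    change z.1 a = 0
    rw [← show f x = a from hx]
    exact DFunLike.congr_fun z.2 x

def indexHom :
    homologyAt (precompHom G g) (precompHom G f) →+ (homologyAt f g →+ G) :=
  QuotientAddGroup.lift _
    { toFun := restrictCycle f g
      map_zero' := by ext; rfl
      map_add' _ _ := by ext; rfl }
    fun z ⟨w, hw⟩ => by
      ext a
      change z.1 a = 0
      rw [show z.1 = w.comp g from hw.symm]
      exact (congr_arg w a.2).trans (map_zero w)

theorem indexHom_mk_mk (z : (precompHom G f).ker) (a : g.ker) :
    indexHom f g (QuotientAddGroup.mk z) (QuotientAddGroup.mk a) = z.1 a :=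
  rfl

theorem indexHom_mk_eq_zero_iff (z : (precompHom G f).ker) :
    indexHom f g (QuotientAddGroup.mk z) = 0 ↔ ∀ a ∈ g.ker, z.1 a = 0 := by
  constructor
  · intro h a ha
    exact DFunLike.congr_fun h (QuotientAddGroup.mk ⟨a, ha⟩)
  · intro h
    ext a
    exact h a a.2

variable {f g}

theorem comp_mk'_comp_retraction_mem_ker_precompHom (hgf : ∀ x, g (f x) = 0)
    {r : Y →+ g.ker} (hr : ∀ a : g.ker, r a = a) (φ : homologyAt f g →+ G) :
    φ.comp ((QuotientAddGroup.mk' (f.range.addSubgroupOf g.ker)).comp r) ∈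
      (precompHom G f).ker := by
  ext x
  have hB : (⟨f x, hgf x⟩ : g.ker) ∈ f.range.addSubgroupOf g.ker := ⟨x, rfl⟩
  change φ (QuotientAddGroup.mk (r (⟨f x, hgf x⟩ : g.ker))) = 0
  rw [hr, (QuotientAddGroup.eq_zero_iff _).mpr hB, map_zero]

theorem indexHom_mk_comp_retraction {r : Y →+ g.ker} (hr : ∀ a : g.ker, r a = a)
    (φ : homologyAt f g →+ G)
    (hmem : φ.comp ((QuotientAddGroup.mk' (f.range.addSubgroupOf g.ker)).comp r) ∈
      (precompHom G f).ker) :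
    indexHom f g (QuotientAddGroup.mk ⟨_, hmem⟩) = φ := by
  ext a
  change φ (QuotientAddGroup.mk (r a)) = φ (QuotientAddGroup.mk a)
  rw [hr]

end Index

theorem index_homomorphism_is_split_epi_with_kernel_ann_general
    {G : Type*} [AddCommGroup G] [TopologicalSpace G]
    (A : ℤ → Type*) [∀ n, AddCommGroup (A n)] [∀ n, Countable (A n)]
    [∀ n, Module.Free ℤ (A n)]
    (δ : ∀ n : ℤ, A n →+ A (n + 1))
    (hδδ : ∀ (n : ℤ) (x : A n), δ (n + 1) (δ n x) = 0) :
    ∀ n : ℤ,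
      ∃ Index :
          (↥(precompHom G (δ n)).ker ⧸
            ((precompHom G (δ (n + 1))).range.addSubgroupOf (precompHom G (δ n)).ker)) →+
          ((↥(δ (n + 1)).ker ⧸ ((δ n).range.addSubgroupOf (δ (n + 1)).ker)) →+ G),
        -- the defining rule Index([z])([a]) = z(a)
        (∀ (z : ↥(precompHom G (δ n)).ker) (a : ↥(δ (n + 1)).ker),
          Index (QuotientAddGroup.mk z) (QuotientAddGroup.mk a) = z.1 a.1) ∧
        -- the kernel of Index is °H_n(A*) = Ann(Z^n(A))/B_n(A*)
        (∀ z : ↥(precompHom G (δ n)).ker,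
          (Index (QuotientAddGroup.mk z) = 0 ↔ ∀ a ∈ (δ (n + 1)).ker, z.1 a = 0)) ∧
        -- a group-theoretic retraction of the inclusion Z^{n+1}(A) ↪ A^{n+1} exists
        (∃ r : A (n + 1) →+ ↥(δ (n + 1)).ker, ∀ a : ↥(δ (n + 1)).ker, r ↑a = a) ∧
        -- for any such retraction, φ ↦ φ ∘ p ∘ i† is continuous, takes values in
        -- Z_{n+1}(A*), and induces a right inverse of Index
        (∀ r : A (n + 1) →+ ↥(δ (n + 1)).ker, (∀ a : ↥(δ (n + 1)).ker, r ↑a = a) →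
          Continuous (fun (φ : (↥(δ (n + 1)).ker ⧸
                ((δ n).range.addSubgroupOf (δ (n + 1)).ker)) → G) (a : A (n + 1)) =>
              φ (QuotientAddGroup.mk (r a))) ∧
          ∀ φ : (↥(δ (n + 1)).ker ⧸ ((δ n).range.addSubgroupOf (δ (n + 1)).ker)) →+ G,
            ∃ hmem : φ.comp ((QuotientAddGroup.mk'
                ((δ n).range.addSubgroupOf (δ (n + 1)).ker)).comp r) ∈
                (precompHom G (δ n)).ker,
              Index (QuotientAddGroup.mk
                (⟨φ.comp ((QuotientAddGroup.mk'
                    ((δ n).range.addSubgroupOf (δ (n + 1)).ker)).comp r), hmem⟩ :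
                  ↥(precompHom G (δ n)).ker)) = φ) := by
  intro n
  refine ⟨indexHom (δ n) (δ (n + 1)), indexHom_mk_mk _ _, indexHom_mk_eq_zero_iff _ _,
    (δ (n + 1)).exists_retraction_ker, fun r hr => ⟨continuous_pi fun _ => continuous_apply _,
      fun φ => ?_⟩⟩
  have hmem := comp_mk'_comp_retraction_mem_ker_precompHom (hδδ n) hr φ
  exact ⟨hmem, indexHom_mk_comp_retraction hr φ hmem⟩

theorem index_homomorphism_is_split_epi_with_kernel_ann
    {G : Type*} [AddCommGroup G] [TopologicalSpace G] [IsTopologicalAddGroup G]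
    [PolishSpace G]
    (hdcp : ∀ k : ℕ, 0 < k → IsClosed {g : G | ∃ x : G, k • x = g})
    (A : ℤ → Type*) [∀ n, AddCommGroup (A n)] [∀ n, Countable (A n)]
    [∀ n, Module.Free ℤ (A n)]
    (δ : ∀ n : ℤ, A n →+ A (n + 1))
    (hδδ : ∀ (n : ℤ) (x : A n), δ (n + 1) (δ n x) = 0) :
    ∀ n : ℤ,
      ∃ Index :
          (↥(precompHom G (δ n)).ker ⧸
            ((precompHom G (δ (n + 1))).range.addSubgroupOf (precompHom G (δ n)).ker)) →+
          ((↥(δ (n + 1)).ker ⧸ ((δ n).range.addSubgroupOf (δ (n + 1)).ker)) →+ G),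
        -- the defining rule Index([z])([a]) = z(a)
        (∀ (z : ↥(precompHom G (δ n)).ker) (a : ↥(δ (n + 1)).ker),
          Index (QuotientAddGroup.mk z) (QuotientAddGroup.mk a) = z.1 a.1) ∧
        -- the kernel of Index is °H_n(A*) = Ann(Z^n(A))/B_n(A*)
        (∀ z : ↥(precompHom G (δ n)).ker,
          (Index (QuotientAddGroup.mk z) = 0 ↔ ∀ a ∈ (δ (n + 1)).ker, z.1 a = 0)) ∧
        -- a group-theoretic retraction of the inclusion Z^{n+1}(A) ↪ A^{n+1} exists
        (∃ r : A (n + 1) →+ ↥(δ (n + 1)).ker, ∀ a : ↥(δ (n + 1)).ker, r ↑a = a) ∧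
        -- for any such retraction, φ ↦ φ ∘ p ∘ i† is continuous, takes values in
        -- Z_{n+1}(A*), and induces a right inverse of Index
        (∀ r : A (n + 1) →+ ↥(δ (n + 1)).ker, (∀ a : ↥(δ (n + 1)).ker, r ↑a = a) →
          Continuous (fun (φ : (↥(δ (n + 1)).ker ⧸
                ((δ n).range.addSubgroupOf (δ (n + 1)).ker)) → G) (a : A (n + 1)) =>
              φ (QuotientAddGroup.mk (r a))) ∧
          ∀ φ : (↥(δ (n + 1)).ker ⧸ ((δ n).range.addSubgroupOf (δ (n + 1)).ker)) →+ G,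
            ∃ hmem : φ.comp ((QuotientAddGroup.mk'
                ((δ n).range.addSubgroupOf (δ (n + 1)).ker)).comp r) ∈
                (precompHom G (δ n)).ker,
              Index (QuotientAddGroup.mk
                (⟨φ.comp ((QuotientAddGroup.mk'
                    ((δ n).range.addSubgroupOf (δ (n + 1)).ker)).comp r), hmem⟩ :
                  ↥(precompHom G (δ n)).ker)) = φ) :=
  index_homomorphism_is_split_epi_with_kernel_ann_general A δ hδδ
end

section
/- Let G be a Polish abelian group with the division closure property, A a cochain complex of countable free abelian groups, and A* its G-dual Polish chain complex. For each n ∈ ℤ, the rule coIndex([f]) = [(−1)^n (f ∘ δ^n)], for f ∈ Hom(B^{n+1}(A),G), gives a well-defined injective group homomorphism coIndex : Hom(B^{n+1}(A),G)/Hom(Z^{n+1}(A)|B^{n+1}(A),G) → H_n(A*), whose image equals °H_n(A*) = Ann(Z^n(A))/B_n(A*). Moreover, coIndex is a split monomorphism: for any group-homomorphism right inverse δ† : B^{n+1}(A) → A^n of δ^n : A^n → B^{n+1}(A), the map Z_n(A*) → Hom(B^{n+1}(A),G), z ↦ (−1)^n (z ∘ δ†), is continuous and induces a left inverse of coIndex.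 -/
/-!
The section `δ†` exists because a subgroup of a free abelian group is free: for free modules
over a principal ideal domain, well-order a basis and pick in each degree `k` an element of the
submodule whose coordinates vanish above `k` and whose `k`-th coordinate generates the ideal of
all such coordinates; the nonzero-diagonal ones form a triangular basis. Given a section `s` of
`δ^n`, `z ↦ (−1)^n (z ∘ s)` retracts `coIndex`, which gives injectivity, and a cycle `z`
annihilating `Z^n(A)` equals `z ∘ s ∘ δ^n`, which gives the image. `coIndex` is well defined
because `Z^{n+1}(A)`, the kernel of a map onto the free group `B^{n+2}(A)`, is a direct summand of
`A^{n+1}`, so homomorphisms on it extend.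

The statement at the paper's degree `n` is formalized at degree `n + 1`, so the paper's
`(−1)^n` is `sgn (n + 1)`, `δ^n` is `δ (n + 1)` and `Z_n(A*)` is `ker (precompHom G (δ n))`.
-/

/-- `(-1)^n` for `n : ℤ`. -/
def sgn (n : ℤ) : ℤ := if Even n then 1 else -1

/-- The subgroup of `Hom(S, G)` of homomorphisms that extend to `T`. -/
def extSub {X G : Type*} [AddCommGroup X] [AddCommGroup G] (S T : AddSubgroup X) :
    AddSubgroup (↥S →+ G) where
  carrier := {f | ∃ ψ : ↥T →+ G, ∀ (x : X) (hxS : x ∈ S) (hxT : x ∈ T),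
    ψ ⟨x, hxT⟩ = f ⟨x, hxS⟩}
  zero_mem' := ⟨0, fun _ _ _ => rfl⟩
  add_mem' := by
    rintro f g ⟨ψ, hψ⟩ ⟨χ, hχ⟩
    exact ⟨ψ + χ, fun x h1 h2 => by
      simp [AddMonoidHom.add_apply, hψ x h1 h2, hχ x h1 h2]⟩
  neg_mem' := by
    rintro f ⟨ψ, hψ⟩
    exact ⟨-ψ, fun x h1 h2 => by simp [hψ x h1 h2]⟩

namespace Finsupp

variable {R ι : Type*} [Ring R] [LinearOrder ι]

theorem linearIndependent_of_upperTriangular [NoZeroDivisors R] (w : ι → ι →₀ R)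
    (hw : ∀ k i, k < i → w k i = 0) :
    LinearIndependent R (fun k : {k // w k k ≠ 0} => w k) := by
  rw [linearIndependent_iff]
  intro l hl
  by_contra hne
  have hsupp : l.support.Nonempty := support_nonempty_iff.2 hne
  set j := l.support.max' hsupp
  have hcoord : linearCombination R (fun k : {k // w k k ≠ 0} => w k) l j = l j * w j j := by
    rw [linearCombination_apply, sum_apply, Finsupp.sum, Finset.sum_eq_single j]
    · simp
    · intro i hi hij
      have hij : i < j := lt_of_le_of_ne (l.support.le_max' i hi) hij
      simp [hw i j hij]
    · exact fun hj => absurd (l.support.max'_mem hsupp) hj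
  rw [hl, zero_apply, eq_comm, mul_eq_zero] at hcoord
  exact hcoord.elim (mem_support_iff.1 (l.support.max'_mem hsupp)) j.2

theorem apply_eq_zero_of_support_max'_lt {M : Type*} [Zero M] {y : ι →₀ M}
    (h : y.support.Nonempty) {i : ι} (hi : y.support.max' h < i) : y i = 0 :=
  notMem_support_iff.1 fun hi' => (not_le.2 hi) (y.support.le_max' i hi')

theorem le_span_of_upperTriangular [WellFoundedLT ι] {N : Submodule R (ι →₀ R)}
    (w : ι → ι →₀ R) (hw : ∀ k i, k < i → w k i = 0) (hwN : ∀ k, w k ∈ N)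
    (hdvd : ∀ k, ∀ y ∈ N, (∀ i, k < i → y i = 0) → ∃ c, y k = c * w k k) :
    N ≤ Submodule.span R (Set.range fun k : {k // w k k ≠ 0} => w k) := by
  set V := Submodule.span R (Set.range fun k : {k // w k k ≠ 0} => w k)
  have key (k : ι) : ∀ y ∈ N, (∀ i, k < i → y i = 0) → y ∈ V := by
    induction k using WellFoundedLT.induction with
    | _ k ih =>
    have below : ∀ y ∈ N, (∀ i, k ≤ i → y i = 0) → y ∈ V := by
      intro y hyN hy
      rcases eq_or_ne y 0 with rfl | hne
      · exact zero_mem V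
      have hsupp := support_nonempty_iff.2 hne
      have hlt : y.support.max' hsupp < k :=
        not_le.1 fun h => mem_support_iff.1 (y.support.max'_mem hsupp) (hy _ h)
      exact ih _ hlt y hyN fun i => apply_eq_zero_of_support_max'_lt hsupp
    have hwV : w k ∈ V := by
      by_cases hk : w k k = 0
      · exact below _ (hwN k) fun i hi => hi.eq_or_lt.elim (· ▸ hk) (hw k i)
      · exact Submodule.subset_span ⟨⟨k, hk⟩, rfl⟩
    intro y hyN hy
    obtain ⟨c, hc⟩ := hdvd k y hyN hy
    have hrest : y - c • w k ∈ V := by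
      refine below _ (sub_mem hyN (N.smul_mem c (hwN k))) fun i hi => ?_
      rcases hi.eq_or_lt with rfl | hi
      · simp [hc]
      · simp [hy i hi, hw k i hi]
    simpa using add_mem hrest (V.smul_mem c hwV)
  intro y hy
  rcases eq_or_ne y 0 with rfl | hne
  · exact zero_mem V
  exact key _ y hy fun i => apply_eq_zero_of_support_max'_lt (support_nonempty_iff.2 hne)

end Finsupp

theorem Submodule.free_of_pid_finsupp {R ι : Type*} [CommRing R] [IsDomain R]
    [IsPrincipalIdealRing R] [LinearOrder ι] [WellFoundedLT ι] (N : Submodule R (ι →₀ R)) :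
    Module.Free R N := by
  have exists_leading (k : ι) : ∃ w ∈ N, (∀ i, k < i → w i = 0) ∧
      ∀ y ∈ N, (∀ i, k < i → y i = 0) → ∃ c, y k = c * w k := by
    have mem_trunc {y : ι →₀ R} :
        y ∈ N ⊓ Finsupp.supported R R (Set.Iic k) ↔ y ∈ N ∧ ∀ i, k < i → y i = 0 := by
      simp [Finsupp.mem_supported', not_le]
    set I : Ideal R := (N ⊓ Finsupp.supported R R (Set.Iic k)).map (Finsupp.lapply k)
    obtain ⟨w, hw, hwk⟩ := Submodule.mem_map.1 (IsPrincipal.generator_mem I)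
    refine ⟨w, (mem_trunc.1 hw).1, (mem_trunc.1 hw).2, fun y hyN hy => ?_⟩
    rw [Finsupp.lapply_apply] at hwk
    simpa [hwk] using (IsPrincipal.mem_iff_eq_smul_generator I).1
      (Submodule.mem_map_of_mem (f := Finsupp.lapply k) (mem_trunc.2 ⟨hyN, hy⟩))
  choose w hwN hw hdvd using exists_leading
  have hspan : N = span R (Set.range fun k : {k // w k k ≠ 0} => w k) :=
    le_antisymm (Finsupp.le_span_of_upperTriangular w hw hwN hdvd)
      (span_le.2 (Set.range_subset_iff.2 fun k => hwN k))
  have := Module.Free.of_basis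
    (Module.Basis.span (Finsupp.linearIndependent_of_upperTriangular w hw))
  exact .of_equiv (LinearEquiv.ofEq _ _ hspan.symm)

theorem Submodule.free_of_pid {R M : Type*} [CommRing R] [IsDomain R] [IsPrincipalIdealRing R]
    [AddCommGroup M] [Module R M] [Module.Free R M] (N : Submodule R M) : Module.Free R N := by
  let b := Module.Free.chooseBasis R M
  let _ : LinearOrder (Module.Free.ChooseBasisIndex R M) := IsWellOrder.linearOrder WellOrderingRel
  have : WellFoundedLT (Module.Free.ChooseBasisIndex R M) := ⟨WellOrderingRel.isWellOrder.wf⟩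
  have := free_of_pid_finsupp (N.map b.repr.toLinearMap)
  exact .of_equiv (N.equivMapOfInjective _ b.repr.injective).symm

theorem AddMonoidHom.exists_section_range {X Y : Type*} [AddCommGroup X] [AddCommGroup Y]
    [Module.Free ℤ Y] (d : X →+ Y) : ∃ σ : d.range →+ X, ∀ y, d (σ y) = y := by
  have := (LinearMap.range d.toIntLinearMap).free_of_pid
  obtain ⟨σ, hσ⟩ := Module.projective_lifting_property d.toIntLinearMap.rangeRestrict LinearMap.id
    d.toIntLinearMap.surjective_rangeRestrict
  exact ⟨σ.toAddMonoidHom, fun y => congrArg Subtype.val (LinearMap.congr_fun hσ y)⟩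

theorem AddMonoidHom.exists_extend_ker {X Y G : Type*} [AddCommGroup X] [AddCommGroup Y]
    [AddCommGroup G] [Module.Free ℤ Y] (d : X →+ Y) (ψ : d.ker →+ G) :
    ∃ g : X →+ G, g.comp d.ker.subtype = ψ := by
  obtain ⟨σ, hσ⟩ := d.exists_section_range
  have hker (x : X) : x - σ (d.rangeRestrict x) ∈ d.ker := by
    simp [hσ]
  let r : X →+ d.ker := (AddMonoidHom.id X - σ.comp d.rangeRestrict).codRestrict _ hker
  refine ⟨ψ.comp r, AddMonoidHom.ext fun x => congrArg ψ (Subtype.ext ?_)⟩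
  have : d.rangeRestrict x = 0 := Subtype.ext x.2
  change (x : X) - σ (d.rangeRestrict x) = x
  rw [this, map_zero, sub_zero]

section CoIndex

variable (G : Type*) {P Q R S : Type*} [AddCommGroup G] [AddCommGroup P] [AddCommGroup Q]
  [AddCommGroup R] [AddCommGroup S] (d₀ : P →+ Q) (d₁ : Q →+ R) (d₂ : R →+ S)

-- For `d₁ = δ^n`, these are `H_n(A*)` and `Hom(B^{n+1}(A),G)/Hom(Z^{n+1}(A)|B^{n+1}(A),G)`.
abbrev DualHomology :=
  (precompHom G d₀).ker ⧸ (precompHom G d₁).range.addSubgroupOf (precompHom G d₀).ker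

abbrev BoundaryDualQuot := (d₁.range →+ G) ⧸ extSub d₁.range d₂.ker

variable {G d₀ d₁ d₂} (h₀₁ : ∀ x, d₁ (d₀ x) = 0) (h₁₂ : ∀ y, d₂ (d₁ y) = 0)
  {s : d₁.range →+ Q} (hs : ∀ b, d₁ (s b) = b)

@[simp]
theorem precompHom_apply {X Y : Type*} [AddCommGroup X] [AddCommGroup Y] (f : X →+ Y)
    (g : Y →+ G) : precompHom G f g = g.comp f := rfl

variable (G) in
def toDualCycles (ε : ℤ) : (d₁.range →+ G) →+ (precompHom G d₀).ker :=
  (ε • precompHom G d₁.rangeRestrict).codRestrict _ fun f => by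
    have (x : P) : d₁.rangeRestrict (d₀ x) = 0 := Subtype.ext (h₀₁ x)
    ext x
    simp [this]

@[simp]
theorem coe_toDualCycles (ε : ℤ) (f : d₁.range →+ G) :
    (toDualCycles G h₀₁ ε f : Q →+ G) = ε • f.comp d₁.rangeRestrict := rfl

theorem toDualCycles_mem_of_mem_extSub [Module.Free ℤ S] (h₁₂ : ∀ y, d₂ (d₁ y) = 0) (ε : ℤ)
    {f : d₁.range →+ G} (hf : f ∈ extSub d₁.range d₂.ker) :
    toDualCycles G h₀₁ ε f ∈ (precompHom G d₁).range.addSubgroupOf (precompHom G d₀).ker := by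
  obtain ⟨ψ, hψ⟩ := hf
  obtain ⟨g, hg⟩ := d₂.exists_extend_ker ψ
  refine ⟨ε • g, AddMonoidHom.ext fun y => ?_⟩
  have hyT : d₁ y ∈ d₂.ker := h₁₂ y
  have : g (d₁ y) = f (d₁.rangeRestrict y) :=
    (congrArg (· ⟨d₁ y, hyT⟩) hg).trans (hψ _ (d₁.rangeRestrict y).2 hyT)
  simp [this]

variable (G) in
def coIndex [Module.Free ℤ S] (ε : ℤ) : BoundaryDualQuot G d₁ d₂ →+ DualHomology G d₀ d₁ :=
  QuotientAddGroup.map _ _ (toDualCycles G h₀₁ ε) fun _ =>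
    toDualCycles_mem_of_mem_extSub h₀₁ h₁₂ ε

theorem coIndex_mk [Module.Free ℤ S] (ε : ℤ) (f : d₁.range →+ G) :
    coIndex G h₀₁ h₁₂ ε (QuotientAddGroup.mk f) =
      QuotientAddGroup.mk (toDualCycles G h₀₁ ε f) :=
  rfl

theorem comp_mem_extSub_of_mem_range (hs : ∀ b, d₁ (s b) = b) (ε : ℤ)
    {z : (precompHom G d₀).ker}
    (hz : z ∈ (precompHom G d₁).range.addSubgroupOf (precompHom G d₀).ker) :
    ε • (z : Q →+ G).comp s ∈ extSub d₁.range d₂.ker := by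
  obtain ⟨g, hg⟩ := hz
  have hz : (z : Q →+ G) = g.comp d₁ := hg.symm
  exact ⟨ε • g.comp d₂.ker.subtype, fun _ _ _ => by simp [hz, hs]⟩

variable (G d₂) in
def coIndexRetraction (ε : ℤ) : DualHomology G d₀ d₁ →+ BoundaryDualQuot G d₁ d₂ :=
  QuotientAddGroup.map _ _ ((ε • precompHom G s).comp (precompHom G d₀).ker.subtype) fun _ =>
    comp_mem_extSub_of_mem_range hs ε

theorem coIndexRetraction_mk (ε : ℤ) (z : (precompHom G d₀).ker) :
    coIndexRetraction G d₂ hs ε (QuotientAddGroup.mk z) =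
      QuotientAddGroup.mk (ε • (z : Q →+ G).comp s) :=
  rfl

theorem coIndexRetraction_coIndex [Module.Free ℤ S] {ε : ℤ} (hε : ε * ε = 1)
    (q : BoundaryDualQuot G d₁ d₂) :
    coIndexRetraction G d₂ hs ε (coIndex G h₀₁ h₁₂ ε q) = q := by
  induction q using QuotientAddGroup.induction_on with
  | H f =>
  have hrs (b : d₁.range) : d₁.rangeRestrict (s b) = b := Subtype.ext (hs b)
  rw [coIndex_mk, coIndexRetraction_mk]
  congr 1
  ext b
  simp [hrs, smul_smul, hε]

theorem coIndex_injective [Module.Free ℤ R] [Module.Free ℤ S] {ε : ℤ} (hε : ε * ε = 1) :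
    Function.Injective (coIndex G h₀₁ h₁₂ ε) := by
  obtain ⟨s, hs⟩ := d₁.exists_section_range
  exact Function.LeftInverse.injective (coIndexRetraction_coIndex h₀₁ h₁₂ hs hε)

theorem exists_coIndex_eq_iff [Module.Free ℤ R] [Module.Free ℤ S] {ε : ℤ} (hε : ε * ε = 1)
    (z : (precompHom G d₀).ker) :
    (∀ a ∈ d₁.ker, (z : Q →+ G) a = 0) ↔
      ∃ q, coIndex G h₀₁ h₁₂ ε q = QuotientAddGroup.mk z := by
  constructor
  · intro hz
    obtain ⟨s, hs⟩ := d₁.exists_section_range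
    refine ⟨coIndexRetraction G d₂ hs ε (QuotientAddGroup.mk z), congrArg _ (Subtype.ext ?_)⟩
    ext x
    have hx : x - s (d₁.rangeRestrict x) ∈ d₁.ker := by simp [hs]
    have := hz _ hx
    rw [map_sub, sub_eq_zero] at this
    simp [smul_smul, hε, this]
  · rintro ⟨q, hq⟩ a ha
    induction q using QuotientAddGroup.induction_on with
    | H f =>
    rw [coIndex_mk, QuotientAddGroup.eq] at hq
    obtain ⟨g, hg⟩ := hq
    have ha' : d₁.rangeRestrict a = 0 := Subtype.ext ha
    simpa [AddMonoidHom.mem_ker.1 ha, ha', eq_comm] using DFunLike.congr_fun hg a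

end CoIndex

theorem sgn_mul_self (n : ℤ) : sgn n * sgn n = 1 := by
  unfold sgn; split <;> norm_num

theorem coindex_homomorphism_is_split_mono_with_image_ann_general
    {G : Type*} [AddCommGroup G] [TopologicalSpace G] [IsTopologicalAddGroup G]
    (A : ℤ → Type*) [∀ n, AddCommGroup (A n)]
    [∀ n, Module.Free ℤ (A n)]
    (δ : ∀ n : ℤ, A n →+ A (n + 1))
    (hδδ : ∀ (n : ℤ) (x : A n), δ (n + 1) (δ n x) = 0) :
    ∀ n : ℤ,
      ∃ coIndex :
          ((↥(δ (n + 1)).range →+ G) ⧸ extSub (δ (n + 1)).range (δ (n + 1 + 1)).ker) →+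
          (↥(precompHom G (δ n)).ker ⧸
            ((precompHom G (δ (n + 1))).range.addSubgroupOf (precompHom G (δ n)).ker)),
        -- the defining rule coIndex([f]) = [(−1)^n (f ∘ δ^n)]
        (∀ f : ↥(δ (n + 1)).range →+ G,
          ∃ hmem : sgn (n + 1) • f.comp (δ (n + 1)).rangeRestrict ∈
              (precompHom G (δ n)).ker,
            coIndex (QuotientAddGroup.mk f) =
              QuotientAddGroup.mk
                (⟨sgn (n + 1) • f.comp (δ (n + 1)).rangeRestrict, hmem⟩ :
                  ↥(precompHom G (δ n)).ker)) ∧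
        -- coIndex is injective
        Function.Injective coIndex ∧
        -- the image of coIndex is °H_n(A*) = Ann(Z^n(A))/B_n(A*)
        (∀ z : ↥(precompHom G (δ n)).ker,
          ((∀ a ∈ (δ (n + 1)).ker, z.1 a = 0) ↔
            ∃ q, coIndex q = QuotientAddGroup.mk z)) ∧
        -- for any group-theoretic section δ† of δ^n : A^n → B^{n+1}(A), the map
        -- z ↦ (−1)^n (z ∘ δ†) is continuous and induces a left inverse of coIndex
        (∀ s : ↥(δ (n + 1)).range →+ A (n + 1),
          (∀ b : ↥(δ (n + 1)).range, δ (n + 1) (s b) = ↑b) →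
          Continuous (fun (z : A (n + 1) → G) (b : ↥(δ (n + 1)).range) =>
            sgn (n + 1) • z (s b)) ∧
          ∃ L : (↥(precompHom G (δ n)).ker ⧸
              ((precompHom G (δ (n + 1))).range.addSubgroupOf (precompHom G (δ n)).ker)) →+
              ((↥(δ (n + 1)).range →+ G) ⧸ extSub (δ (n + 1)).range (δ (n + 1 + 1)).ker),
            (∀ z : ↥(precompHom G (δ n)).ker,
              L (QuotientAddGroup.mk z) = QuotientAddGroup.mk (sgn (n + 1) • z.1.comp s)) ∧
            ∀ q, L (coIndex q) = q) := by
  intro n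
  have hε := sgn_mul_self (n + 1)
  refine ⟨coIndex G (hδδ n) (hδδ (n + 1)) (sgn (n + 1)), fun f => ⟨_, coIndex_mk _ _ _ f⟩,
    coIndex_injective _ _ hε, exists_coIndex_eq_iff _ _ hε, fun s hs => ⟨by fun_prop, ?_⟩⟩
  exact ⟨coIndexRetraction G _ hs _, coIndexRetraction_mk hs _,
    coIndexRetraction_coIndex _ _ hs hε⟩

theorem coindex_homomorphism_is_split_mono_with_image_ann
    {G : Type*} [AddCommGroup G] [TopologicalSpace G] [IsTopologicalAddGroup G]
    [PolishSpace G]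
    (hdcp : ∀ k : ℕ, 0 < k → IsClosed {g : G | ∃ x : G, k • x = g})
    (A : ℤ → Type*) [∀ n, AddCommGroup (A n)] [∀ n, Countable (A n)]
    [∀ n, Module.Free ℤ (A n)]
    (δ : ∀ n : ℤ, A n →+ A (n + 1))
    (hδδ : ∀ (n : ℤ) (x : A n), δ (n + 1) (δ n x) = 0) :
    ∀ n : ℤ,
      ∃ coIndex :
          ((↥(δ (n + 1)).range →+ G) ⧸ extSub (δ (n + 1)).range (δ (n + 1 + 1)).ker) →+
          (↥(precompHom G (δ n)).ker ⧸
            ((precompHom G (δ (n + 1))).range.addSubgroupOf (precompHom G (δ n)).ker)),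
        -- the defining rule coIndex([f]) = [(−1)^n (f ∘ δ^n)]
        (∀ f : ↥(δ (n + 1)).range →+ G,
          ∃ hmem : sgn (n + 1) • f.comp (δ (n + 1)).rangeRestrict ∈
              (precompHom G (δ n)).ker,
            coIndex (QuotientAddGroup.mk f) =
              QuotientAddGroup.mk
                (⟨sgn (n + 1) • f.comp (δ (n + 1)).rangeRestrict, hmem⟩ :
                  ↥(precompHom G (δ n)).ker)) ∧
        -- coIndex is injective
        Function.Injective coIndex ∧
        -- the image of coIndex is °H_n(A*) = Ann(Z^n(A))/B_n(A*)
        (∀ z : ↥(precompHom G (δ n)).ker,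
          ((∀ a ∈ (δ (n + 1)).ker, z.1 a = 0) ↔
            ∃ q, coIndex q = QuotientAddGroup.mk z)) ∧
        -- for any group-theoretic section δ† of δ^n : A^n → B^{n+1}(A), the map
        -- z ↦ (−1)^n (z ∘ δ†) is continuous and induces a left inverse of coIndex
        (∀ s : ↥(δ (n + 1)).range →+ A (n + 1),
          (∀ b : ↥(δ (n + 1)).range, δ (n + 1) (s b) = ↑b) →
          Continuous (fun (z : A (n + 1) → G) (b : ↥(δ (n + 1)).range) =>
            sgn (n + 1) • z (s b)) ∧
          ∃ L : (↥(precompHom G (δ n)).ker ⧸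
              ((precompHom G (δ (n + 1))).range.addSubgroupOf (precompHom G (δ n)).ker)) →+
              ((↥(δ (n + 1)).range →+ G) ⧸ extSub (δ (n + 1)).range (δ (n + 1 + 1)).ker),
            (∀ z : ↥(precompHom G (δ n)).ker,
              L (QuotientAddGroup.mk z) = QuotientAddGroup.mk (sgn (n + 1) • z.1.comp s)) ∧
            ∀ q, L (coIndex q) = q) :=
  coindex_homomorphism_is_split_mono_with_image_ann_general A δ hδδ
end

section
/- Let G be a Polish abelian group with the division closure property, and let 0 → A →(i) B →(π) C → 0 be an exact sequence of cochain complexes of countable free abelian groups and cochain maps that is split in each degree; let 0 → C* → B* → A* → 0 be its G-dual sequence of Polish chain complexes. Let d^n : H^n(C) → H^{n+1}(A) and d_n : H_n(A*) → H_{n−1}(C*) be the connecting homomorphisms (induced, for compatible choices of degreewise splittings i†, π† with i†∘π† = 0, by d̂^n = i†∘δ^n∘π† and its dual). Then for every n ∈ ℤ: (i) Index_C ∘ d_n = Hom(d^{n−1},G) ∘ Index_A as maps H_n(A*) → Hom(H^{n−1}(C),G); and (ii) d_n ∘ coIndex_A = coIndex_C ∘ E^n, where E^n : Hom(B^{n+1}(A),G)/Hom(Z^{n+1}(A)|B^{n+1}(A),G)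 → Hom(B^n(C),G)/Hom(Z^n(C)|B^n(C),G) is induced by θ ↦ θ ∘ (d̂^n restricted to B^n(C)). -/
theorem sgn_add_one (n : ℤ) : sgn (n + 1) = -sgn n := by
  by_cases h : Even n <;> simp [sgn, h]

theorem comp_rangeRestrict_mem_ker_precompHom {G X Y Z : Type*} [AddCommGroup G]
    [AddCommGroup X] [AddCommGroup Y] [AddCommGroup Z] {d₁ : X →+ Y} {d₂ : Y →+ Z}
    (hd : ∀ x, d₂ (d₁ x) = 0) (f : ↥d₂.range →+ G) :
    f.comp d₂.rangeRestrict ∈ (precompHom G d₁).ker := by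
  refine AddMonoidHom.mem_ker.2 (AddMonoidHom.ext fun x => ?_)
  change f (d₂.rangeRestrict (d₁ x)) = 0
  rw [show d₂.rangeRestrict (d₁ x) = 0 from Subtype.ext (hd x), map_zero]

section AnticommutingSquare

variable {X Y X' Y' : Type*} [AddCommGroup X] [AddCommGroup Y] [AddCommGroup X']
  [AddCommGroup Y'] {d : X →+ Y} {d' : X' →+ Y'} {h : X →+ X'} {h' : Y →+ Y'}

theorem map_mem_ker_of_anticomm (hc : ∀ x, h' (d x) = -d' (h x)) {x : X} (hx : x ∈ d.ker) :
    h x ∈ d'.ker := by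
  rw [AddMonoidHom.mem_ker] at hx ⊢
  rw [← neg_eq_zero, ← hc, hx, map_zero]

theorem map_mem_range_of_anticomm (hc : ∀ x, h' (d x) = -d' (h x)) {y : Y} (hy : y ∈ d.range) :
    h' y ∈ d'.range := by
  obtain ⟨x, rfl⟩ := hy
  exact ⟨-h x, by rw [hc, map_neg]⟩

theorem comp_mem_ker_precompHom_of_anticomm {G : Type*} [AddCommGroup G]
    (hc : ∀ x, h' (d x) = -d' (h x)) {z : Y' →+ G} (hz : z ∈ (precompHom G d').ker) :
    z.comp h' ∈ (precompHom G d).ker := by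
  refine AddMonoidHom.mem_ker.2 (AddMonoidHom.ext fun x => ?_)
  change z (h' (d x)) = 0
  rw [hc, map_neg, neg_eq_zero]
  exact DFunLike.congr_fun (AddMonoidHom.mem_ker.1 hz) (h x)

def rangeMapOfAnticomm (hc : ∀ x, h' (d x) = -d' (h x)) : ↥d.range →+ ↥d'.range :=
  (h'.domRestrict d.range).codRestrict d'.range fun y => map_mem_range_of_anticomm hc y.2

theorem rangeMapOfAnticomm_comp_rangeRestrict (hc : ∀ x, h' (d x) = -d' (h x)) :
    (rangeMapOfAnticomm hc).comp d.rangeRestrict = -d'.rangeRestrict.comp h :=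
  AddMonoidHom.ext fun x => Subtype.ext (hc x)

end AnticommutingSquare

section SplitConnecting

variable {A B C : ℤ → Type*} [∀ n, AddCommGroup (A n)] [∀ n, AddCommGroup (B n)]
  [∀ n, AddCommGroup (C n)]

def splitConnecting (δB : ∀ n : ℤ, B n →+ B (n + 1)) (iret : ∀ n : ℤ, B n →+ A n)
    (psec : ∀ n : ℤ, C n →+ B n) (k : ℤ) : C k →+ A (k + 1) :=
  (iret (k + 1)).comp ((δB k).comp (psec k))

variable {δA : ∀ n : ℤ, A n →+ A (n + 1)} {δB : ∀ n : ℤ, B n →+ B (n + 1)}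
  {δC : ∀ n : ℤ, C n →+ C (n + 1)} {i : ∀ n : ℤ, A n →+ B n} {p : ∀ n : ℤ, B n →+ C n}
  {iret : ∀ n : ℤ, B n →+ A n} {psec : ∀ n : ℤ, C n →+ B n}


theorem splitConnecting_map_δ (hδB : ∀ (n : ℤ) (x : B n), δB (n + 1) (δB n x) = 0)
    (hichain : ∀ (n : ℤ) (x : A n), δB n (i n x) = i (n + 1) (δA n x))
    (hpchain : ∀ (n : ℤ) (x : B n), δC n (p n x) = p (n + 1) (δB n x))
    (hexact : ∀ n, (p n).ker ≤ (i n).range) (hiret : ∀ (n : ℤ) (a : A n), iret n (i n a) = a)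
    (hpsec : ∀ (n : ℤ) (c : C n), p n (psec n c) = c)
    (hcomp0 : ∀ (n : ℤ) (c : C n), iret n (psec n c) = 0) (k : ℤ) (c : C k) :
    splitConnecting δB iret psec (k + 1) (δC k c) =
      -δA (k + 1) (splitConnecting δB iret psec k c) := by
  simp only [splitConnecting, AddMonoidHom.comp_apply]
  obtain ⟨a, ha⟩ : psec (k + 1) (δC k c) - δB k (psec k c) ∈ (i (k + 1)).range :=
    hexact _ (by rw [AddMonoidHom.mem_ker, map_sub, hpsec, ← hpchain, hpsec, sub_self])
  have ha_eq : a = -iret (k + 1) (δB k (psec k c)) := by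
    simpa [hiret, hcomp0] using congrArg (iret (k + 1)) ha
  rw [eq_add_of_sub_eq' ha.symm, map_add, map_add, hδB, map_zero, zero_add, hichain, hiret, ha_eq,
    map_neg]

end SplitConnecting

theorem uct_natural_with_respect_to_connecting_homomorphisms_general
    {G : Type*} [AddCommGroup G]
    (A B C : ℤ → Type*)
    [∀ n, AddCommGroup (A n)] [∀ n, AddCommGroup (B n)] [∀ n, AddCommGroup (C n)]
    (δA : ∀ n : ℤ, A n →+ A (n + 1)) (δB : ∀ n : ℤ, B n →+ B (n + 1))
    (δC : ∀ n : ℤ, C n →+ C (n + 1))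
    (hδA : ∀ (n : ℤ) (x : A n), δA (n + 1) (δA n x) = 0)
    (hδB : ∀ (n : ℤ) (x : B n), δB (n + 1) (δB n x) = 0)
    (hδC : ∀ (n : ℤ) (x : C n), δC (n + 1) (δC n x) = 0)
    -- the cochain maps i : A → B and π : B → C
    (i : ∀ n : ℤ, A n →+ B n)
    (hichain : ∀ (n : ℤ) (x : A n), δB n (i n x) = i (n + 1) (δA n x))
    (p : ∀ n : ℤ, B n →+ C n)
    (hpchain : ∀ (n : ℤ) (x : B n), δC n (p n x) = p (n + 1) (δB n x))
    -- degreewise exactness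
    (hexact : ∀ n, (i n).range = (p n).ker)
    -- compatible degreewise splittings with i† ∘ π† = 0
    (iret : ∀ n : ℤ, B n →+ A n) (hiret : ∀ (n : ℤ) (a : A n), iret n (i n a) = a)
    (psec : ∀ n : ℤ, C n →+ B n) (hpsec : ∀ (n : ℤ) (c : C n), p n (psec n c) = c)
    (hcomp0 : ∀ (n : ℤ) (c : C n), iret n (psec n c) = 0) :
    ∀ m : ℤ,
      -- d̂^k := i† ∘ δ^k ∘ π†
      ∀ dhat : ∀ k : ℤ, C k →+ A (k + 1),
      (∀ k : ℤ, dhat k = (iret (k + 1)).comp ((δB k).comp (psec k))) →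
      -- the connecting homomorphism d^{n−1} : H^{n−1}(C) → H^n(A)
      ∀ dc : (↥(δC (m + 1)).ker ⧸ ((δC m).range.addSubgroupOf (δC (m + 1)).ker)) →+
             (↥(δA (m + 1 + 1)).ker ⧸ ((δA (m + 1)).range.addSubgroupOf (δA (m + 1 + 1)).ker)),
      (∀ (a : ↥(δC (m + 1)).ker) (hm : dhat (m + 1) a.1 ∈ (δA (m + 1 + 1)).ker),
        dc (QuotientAddGroup.mk a) =
          QuotientAddGroup.mk (⟨dhat (m + 1) a.1, hm⟩ : ↥(δA (m + 1 + 1)).ker)) →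
      -- the dual connecting homomorphism d_n : H_n(A*) → H_{n−1}(C*)
      ∀ ddual : (↥(precompHom G (δA (m + 1))).ker ⧸
            ((precompHom G (δA (m + 1 + 1))).range.addSubgroupOf
              (precompHom G (δA (m + 1))).ker)) →+
          (↥(precompHom G (δC m)).ker ⧸
            ((precompHom G (δC (m + 1))).range.addSubgroupOf (precompHom G (δC m)).ker)),
      (∀ (z : ↥(precompHom G (δA (m + 1))).ker)
        (hm : z.1.comp (dhat (m + 1)) ∈ (precompHom G (δC m)).ker),
        ddual (QuotientAddGroup.mk z) =
          QuotientAddGroup.mk (⟨z.1.comp (dhat (m + 1)), hm⟩ : ↥(precompHom G (δC m)).ker)) →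
      -- the index homomorphisms of A and of C
      ∀ IndexA : (↥(precompHom G (δA (m + 1))).ker ⧸
            ((precompHom G (δA (m + 1 + 1))).range.addSubgroupOf
              (precompHom G (δA (m + 1))).ker)) →+
          ((↥(δA (m + 1 + 1)).ker ⧸
            ((δA (m + 1)).range.addSubgroupOf (δA (m + 1 + 1)).ker)) →+ G),
      (∀ (z : ↥(precompHom G (δA (m + 1))).ker) (a : ↥(δA (m + 1 + 1)).ker),
        IndexA (QuotientAddGroup.mk z) (QuotientAddGroup.mk a) = z.1 a.1) →
      ∀ IndexC : (↥(precompHom G (δC m)).ker ⧸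
            ((precompHom G (δC (m + 1))).range.addSubgroupOf (precompHom G (δC m)).ker)) →+
          ((↥(δC (m + 1)).ker ⧸ ((δC m).range.addSubgroupOf (δC (m + 1)).ker)) →+ G),
      (∀ (w : ↥(precompHom G (δC m)).ker) (a : ↥(δC (m + 1)).ker),
        IndexC (QuotientAddGroup.mk w) (QuotientAddGroup.mk a) = w.1 a.1) →
      -- the co-index homomorphisms of A and of C
      ∀ coIndexA : ((↥(δA (m + 1 + 1)).range →+ G) ⧸
            extSub (δA (m + 1 + 1)).range (δA (m + 1 + 1 + 1)).ker) →+
          (↥(precompHom G (δA (m + 1))).ker ⧸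
            ((precompHom G (δA (m + 1 + 1))).range.addSubgroupOf
              (precompHom G (δA (m + 1))).ker)),
      (∀ (f : ↥(δA (m + 1 + 1)).range →+ G)
        (hm : sgn (m + 1 + 1) • f.comp (δA (m + 1 + 1)).rangeRestrict ∈
          (precompHom G (δA (m + 1))).ker),
        coIndexA (QuotientAddGroup.mk f) =
          QuotientAddGroup.mk
            (⟨sgn (m + 1 + 1) • f.comp (δA (m + 1 + 1)).rangeRestrict, hm⟩ :
              ↥(precompHom G (δA (m + 1))).ker)) →
      ∀ coIndexC : ((↥(δC (m + 1)).range →+ G) ⧸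
            extSub (δC (m + 1)).range (δC (m + 1 + 1)).ker) →+
          (↥(precompHom G (δC m)).ker ⧸
            ((precompHom G (δC (m + 1))).range.addSubgroupOf (precompHom G (δC m)).ker)),
      (∀ (f : ↥(δC (m + 1)).range →+ G)
        (hm : sgn (m + 1) • f.comp (δC (m + 1)).rangeRestrict ∈
          (precompHom G (δC m)).ker),
        coIndexC (QuotientAddGroup.mk f) =
          QuotientAddGroup.mk
            (⟨sgn (m + 1) • f.comp (δC (m + 1)).rangeRestrict, hm⟩ :
              ↥(precompHom G (δC m)).ker)) →
      -- the homomorphism E^n induced by θ ↦ θ ∘ (d̂^n restricted to B^n(C))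
      ∀ E : ((↥(δA (m + 1 + 1)).range →+ G) ⧸
            extSub (δA (m + 1 + 1)).range (δA (m + 1 + 1 + 1)).ker) →+
          ((↥(δC (m + 1)).range →+ G) ⧸ extSub (δC (m + 1)).range (δC (m + 1 + 1)).ker),
      (∀ (θ : ↥(δA (m + 1 + 1)).range →+ G) (g : ↥(δC (m + 1)).range →+ G),
        (∀ (b : C (m + 1 + 1)) (hb : b ∈ (δC (m + 1)).range)
          (hm : dhat (m + 1 + 1) b ∈ (δA (m + 1 + 1)).range),
          g ⟨b, hb⟩ = θ ⟨dhat (m + 1 + 1) b, hm⟩) →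
        E (QuotientAddGroup.mk θ) = QuotientAddGroup.mk g) →
      -- (i) Index_C ∘ d_n = Hom(d^{n−1}, G) ∘ Index_A
      (∀ x, IndexC (ddual x) = (IndexA x).comp dc) ∧
      -- (ii) d_n ∘ coIndex_A = coIndex_C ∘ E^n
      (∀ q, ddual (coIndexA q) = coIndexC (E q)) := by
  intro m dhat hdhat dc hdc ddual hddual IndexA hIndexA IndexC hIndexC coIndexA hcoIndexA
    coIndexC hcoIndexC E hE
  obtain rfl : dhat = splitConnecting δB iret psec := funext hdhat
  have hanticomm :=
    splitConnecting_map_δ hδB hichain hpchain (fun n => (hexact n).ge) hiret hpsec hcomp0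
  have hcocycle (a : ↥(δC (m + 1)).ker) := map_mem_ker_of_anticomm (hanticomm (m + 1)) a.2
  have hdual (z : ↥(precompHom G (δA (m + 1))).ker) :=
    comp_mem_ker_precompHom_of_anticomm (G := G) (hanticomm m) z.2
  refine ⟨fun x => ?_, fun q => ?_⟩
  · induction x using QuotientAddGroup.induction_on with | H z => ?_
    ext a
    simp only [AddMonoidHom.comp_apply, QuotientAddGroup.mk'_apply]
    rw [hddual z (hdual z), hIndexC, hdc a (hcocycle a), hIndexA]
    rfl
  · induction q using QuotientAddGroup.induction_on with | H f => ?_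
    have hcobA := comp_rangeRestrict_mem_ker_precompHom (hδA (m + 1)) f
    set g := f.comp (rangeMapOfAnticomm (hanticomm (m + 1)))
    have hcobC := comp_rangeRestrict_mem_ker_precompHom (hδC m) g
    rw [hE f g fun _ _ _ => rfl, hcoIndexA f (zsmul_mem hcobA _), hcoIndexC _ (zsmul_mem hcobC _),
      hddual _ (hdual _)]
    congr 2
    rw [AddMonoidHom.comp_assoc, rangeMapOfAnticomm_comp_rangeRestrict, sgn_add_one]
    ext x
    simp

theorem uct_natural_with_respect_to_connecting_homomorphisms
    {G : Type*} [AddCommGroup G] [TopologicalSpace G] [IsTopologicalAddGroup G]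
    [PolishSpace G]
    (hdcp : ∀ k : ℕ, 0 < k → IsClosed {g : G | ∃ x : G, k • x = g})
    (A B C : ℤ → Type*)
    [∀ n, AddCommGroup (A n)] [∀ n, Countable (A n)] [∀ n, Module.Free ℤ (A n)]
    [∀ n, AddCommGroup (B n)] [∀ n, Countable (B n)] [∀ n, Module.Free ℤ (B n)]
    [∀ n, AddCommGroup (C n)] [∀ n, Countable (C n)] [∀ n, Module.Free ℤ (C n)]
    (δA : ∀ n : ℤ, A n →+ A (n + 1)) (δB : ∀ n : ℤ, B n →+ B (n + 1))
    (δC : ∀ n : ℤ, C n →+ C (n + 1))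
    (hδA : ∀ (n : ℤ) (x : A n), δA (n + 1) (δA n x) = 0)
    (hδB : ∀ (n : ℤ) (x : B n), δB (n + 1) (δB n x) = 0)
    (hδC : ∀ (n : ℤ) (x : C n), δC (n + 1) (δC n x) = 0)
    -- the cochain maps i : A → B and π : B → C
    (i : ∀ n : ℤ, A n →+ B n)
    (hichain : ∀ (n : ℤ) (x : A n), δB n (i n x) = i (n + 1) (δA n x))
    (p : ∀ n : ℤ, B n →+ C n)
    (hpchain : ∀ (n : ℤ) (x : B n), δC n (p n x) = p (n + 1) (δB n x))
    -- degreewise exactness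
    (hinj : ∀ n, Function.Injective (i n))
    (hexact : ∀ n, (i n).range = (p n).ker)
    (hsurj : ∀ n, Function.Surjective (p n))
    -- compatible degreewise splittings with i† ∘ π† = 0
    (iret : ∀ n : ℤ, B n →+ A n) (hiret : ∀ (n : ℤ) (a : A n), iret n (i n a) = a)
    (psec : ∀ n : ℤ, C n →+ B n) (hpsec : ∀ (n : ℤ) (c : C n), p n (psec n c) = c)
    (hcomp0 : ∀ (n : ℤ) (c : C n), iret n (psec n c) = 0) :
    ∀ m : ℤ,
      -- d̂^k := i† ∘ δ^k ∘ π†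
      ∀ dhat : ∀ k : ℤ, C k →+ A (k + 1),
      (∀ k : ℤ, dhat k = (iret (k + 1)).comp ((δB k).comp (psec k))) →
      -- the connecting homomorphism d^{n−1} : H^{n−1}(C) → H^n(A)
      ∀ dc : (↥(δC (m + 1)).ker ⧸ ((δC m).range.addSubgroupOf (δC (m + 1)).ker)) →+
             (↥(δA (m + 1 + 1)).ker ⧸ ((δA (m + 1)).range.addSubgroupOf (δA (m + 1 + 1)).ker)),
      (∀ (a : ↥(δC (m + 1)).ker) (hm : dhat (m + 1) a.1 ∈ (δA (m + 1 + 1)).ker),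
        dc (QuotientAddGroup.mk a) =
          QuotientAddGroup.mk (⟨dhat (m + 1) a.1, hm⟩ : ↥(δA (m + 1 + 1)).ker)) →
      -- the dual connecting homomorphism d_n : H_n(A*) → H_{n−1}(C*)
      ∀ ddual : (↥(precompHom G (δA (m + 1))).ker ⧸
            ((precompHom G (δA (m + 1 + 1))).range.addSubgroupOf
              (precompHom G (δA (m + 1))).ker)) →+
          (↥(precompHom G (δC m)).ker ⧸
            ((precompHom G (δC (m + 1))).range.addSubgroupOf (precompHom G (δC m)).ker)),
      (∀ (z : ↥(precompHom G (δA (m + 1))).ker)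
        (hm : z.1.comp (dhat (m + 1)) ∈ (precompHom G (δC m)).ker),
        ddual (QuotientAddGroup.mk z) =
          QuotientAddGroup.mk (⟨z.1.comp (dhat (m + 1)), hm⟩ : ↥(precompHom G (δC m)).ker)) →
      -- the index homomorphisms of A and of C
      ∀ IndexA : (↥(precompHom G (δA (m + 1))).ker ⧸
            ((precompHom G (δA (m + 1 + 1))).range.addSubgroupOf
              (precompHom G (δA (m + 1))).ker)) →+
          ((↥(δA (m + 1 + 1)).ker ⧸
            ((δA (m + 1)).range.addSubgroupOf (δA (m + 1 + 1)).ker)) →+ G),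
      (∀ (z : ↥(precompHom G (δA (m + 1))).ker) (a : ↥(δA (m + 1 + 1)).ker),
        IndexA (QuotientAddGroup.mk z) (QuotientAddGroup.mk a) = z.1 a.1) →
      ∀ IndexC : (↥(precompHom G (δC m)).ker ⧸
            ((precompHom G (δC (m + 1))).range.addSubgroupOf (precompHom G (δC m)).ker)) →+
          ((↥(δC (m + 1)).ker ⧸ ((δC m).range.addSubgroupOf (δC (m + 1)).ker)) →+ G),
      (∀ (w : ↥(precompHom G (δC m)).ker) (a : ↥(δC (m + 1)).ker),
        IndexC (QuotientAddGroup.mk w) (QuotientAddGroup.mk a) = w.1 a.1) →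
      -- the co-index homomorphisms of A and of C
      ∀ coIndexA : ((↥(δA (m + 1 + 1)).range →+ G) ⧸
            extSub (δA (m + 1 + 1)).range (δA (m + 1 + 1 + 1)).ker) →+
          (↥(precompHom G (δA (m + 1))).ker ⧸
            ((precompHom G (δA (m + 1 + 1))).range.addSubgroupOf
              (precompHom G (δA (m + 1))).ker)),
      (∀ (f : ↥(δA (m + 1 + 1)).range →+ G)
        (hm : sgn (m + 1 + 1) • f.comp (δA (m + 1 + 1)).rangeRestrict ∈
          (precompHom G (δA (m + 1))).ker),
        coIndexA (QuotientAddGroup.mk f) =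
          QuotientAddGroup.mk
            (⟨sgn (m + 1 + 1) • f.comp (δA (m + 1 + 1)).rangeRestrict, hm⟩ :
              ↥(precompHom G (δA (m + 1))).ker)) →
      ∀ coIndexC : ((↥(δC (m + 1)).range →+ G) ⧸
            extSub (δC (m + 1)).range (δC (m + 1 + 1)).ker) →+
          (↥(precompHom G (δC m)).ker ⧸
            ((precompHom G (δC (m + 1))).range.addSubgroupOf (precompHom G (δC m)).ker)),
      (∀ (f : ↥(δC (m + 1)).range →+ G)
        (hm : sgn (m + 1) • f.comp (δC (m + 1)).rangeRestrict ∈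
          (precompHom G (δC m)).ker),
        coIndexC (QuotientAddGroup.mk f) =
          QuotientAddGroup.mk
            (⟨sgn (m + 1) • f.comp (δC (m + 1)).rangeRestrict, hm⟩ :
              ↥(precompHom G (δC m)).ker)) →
      -- the homomorphism E^n induced by θ ↦ θ ∘ (d̂^n restricted to B^n(C))
      ∀ E : ((↥(δA (m + 1 + 1)).range →+ G) ⧸
            extSub (δA (m + 1 + 1)).range (δA (m + 1 + 1 + 1)).ker) →+
          ((↥(δC (m + 1)).range →+ G) ⧸ extSub (δC (m + 1)).range (δC (m + 1 + 1)).ker),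
      (∀ (θ : ↥(δA (m + 1 + 1)).range →+ G) (g : ↥(δC (m + 1)).range →+ G),
        (∀ (b : C (m + 1 + 1)) (hb : b ∈ (δC (m + 1)).range)
          (hm : dhat (m + 1 + 1) b ∈ (δA (m + 1 + 1)).range),
          g ⟨b, hb⟩ = θ ⟨dhat (m + 1 + 1) b, hm⟩) →
        E (QuotientAddGroup.mk θ) = QuotientAddGroup.mk g) →
      -- (i) Index_C ∘ d_n = Hom(d^{n−1}, G) ∘ Index_A
      (∀ x, IndexC (ddual x) = (IndexA x).comp dc) ∧
      -- (ii) d_n ∘ coIndex_A = coIndex_C ∘ E^n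
      (∀ q, ddual (coIndexA q) = coIndexC (E q)) :=
  uct_natural_with_respect_to_connecting_homomorphisms_general A B C δA δB δC hδA hδB hδC i hichain
    p hpchain hexact iret hiret psec hpsec hcomp0
end

section
/- Let G be a Polish abelian group with the division closure property and let A = (A^n, δ^n)_{n∈ℤ} be a cochain complex of finitely generated free abelian groups. Then the G-dual Polish chain complex A* is proper: for every n ∈ ℤ, the subgroup B_n(A*) = {w ∘ δ^n : w ∈ Hom(A^{n+1},G)} is a closed subgroup of A*_n = Hom(A^n,G). -/
/-!
Take a Smith normal form for the image of `δ n` in the free module `A (n + 1)`: a basis `(e j)`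
of `A (n + 1)` and a basis `(a i • e (f i))` of the image, with `a i ≠ 0`, and preimages `x i` of
the latter. A homomorphism `z` on `A n` factors through `δ n` exactly when it kills `ker (δ n)`
and every `z (x i)` is divisible by `a i` in `G`; a factorization is then prescribed on the
basis `(e j)`. The first condition is closed because points of `G` are closed, the second by the
division closure property.
-/

open Submodule LinearMap

section

variable {R P M : Type*} [Ring R] [AddCommGroup P] [AddCommGroup M] [Module R P] [Module R M]

theorem LinearMap.ker_sup_span_eq_top {ι : Type*} {d : P →ₗ[R] M} {x : ι → P}
    (hx : span R (Set.range (d ∘ x)) = LinearMap.range d) : ker d ⊔ span R (Set.range x) = ⊤ := by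
  have hmap : map d (span R (Set.range x)) = map d ⊤ := by
    rw [← span_image, ← Set.range_comp, hx, Submodule.map_top]
  rw [sup_comm, ← comap_map_eq, hmap, comap_map_eq, top_sup_eq]

end

section

variable {R P M G ι : Type*} [CommRing R] [AddCommGroup P] [AddCommGroup M] [AddCommGroup G]
  [Module R P] [Module R M] [Module R G] {m : ℕ}

theorem Module.Basis.SmithNormalForm.a_ne_zero [Nontrivial R] {N : Submodule R M}
    (snf : Basis.SmithNormalForm N ι m) (i : Fin m) : snf.a i ≠ 0 := by
  intro h
  exact snf.bN.ne_zero i (Subtype.ext (by rw [snf.snf, h, zero_smul, ZeroMemClass.coe_zero]))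

theorem Module.Basis.SmithNormalForm.exists_comp_eq_iff {d : P →ₗ[R] M}
    (snf : Basis.SmithNormalForm (LinearMap.range d) ι m) {x : Fin m → P}
    (hx : ∀ i, d (x i) = snf.bN i) (z : P →ₗ[R] G) :
    (∃ w : M →ₗ[R] G, w ∘ₗ d = z) ↔ ker d ≤ ker z ∧ ∀ i, ∃ g, snf.a i • g = z (x i) := by
  constructor
  · rintro ⟨w, rfl⟩
    exact ⟨ker_le_ker_comp d w, fun i => ⟨w (snf.bM (snf.f i)), by simp [hx, snf.snf]⟩⟩
  · rintro ⟨hker, hdiv⟩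
    choose g hg using hdiv
    let w : M →ₗ[R] G := snf.bM.constr R (Function.extend snf.f g 0)
    -- `z - w ∘ₗ d` vanishes on `ker d` and on every `x i`, and these together span `P`.
    refine ⟨w, Eq.symm <| sub_eq_zero.mp <| ker_eq_top.mp <| eq_top_iff.mpr ?_⟩
    have hspan : span R (Set.range (d ∘ x)) = LinearMap.range d := by
      have : d ∘ x = (LinearMap.range d).subtype ∘ snf.bN := funext hx
      rw [this, Set.range_comp, span_image, snf.bN.span_eq, map_subtype_top]
    rw [← ker_sup_span_eq_top hspan]
    refine sup_le (fun u hu => ?_) (span_le.mpr ?_)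
    · simp [mem_ker.mp hu, mem_ker.mp (hker hu)]
    · rintro _ ⟨i, rfl⟩
      simp [w, hx, snf.snf, snf.f.injective.extend_apply, hg]

end

section

variable {P M G ι : Type*} [AddCommGroup P] [AddCommGroup M] [AddCommGroup G] {m : ℕ}

theorem Module.Basis.SmithNormalForm.exists_addMonoidHom_comp_eq_iff {d : P →+ M}
    (snf : Basis.SmithNormalForm (LinearMap.range d.toIntLinearMap) ι m) {x : Fin m → P}
    (hx : ∀ i, d (x i) = snf.bN i) (z : P →+ G) :
    (∃ w : M →+ G, ∀ a, z a = w (d a)) ↔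
      (∀ u, d u = 0 → z u = 0) ∧ ∀ i, z (x i) ∈ Set.range (snf.a i • · : G → G) :=
  calc (∃ w : M →+ G, ∀ a, z a = w (d a))
      ↔ ∃ w : M →ₗ[ℤ] G, w ∘ₗ d.toIntLinearMap = z.toIntLinearMap :=
        ⟨fun ⟨w, hw⟩ => ⟨w.toIntLinearMap, LinearMap.ext fun a => (hw a).symm⟩,
          fun ⟨w, hw⟩ => ⟨w.toAddMonoidHom, fun a => (LinearMap.congr_fun hw a).symm⟩⟩
    _ ↔ _ := snf.exists_comp_eq_iff hx _

theorem isClosed_range_zsmul [TopologicalSpace G]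
    (hdiv : ∀ k : ℕ, 0 < k → IsClosed {g : G | ∃ x : G, k • x = g}) {a : ℤ} (ha : a ≠ 0) :
    IsClosed (Set.range (a • · : G → G)) := by
  obtain ⟨k, rfl | rfl⟩ := Int.eq_nat_or_neg a
  · simp only [natCast_zsmul]
    exact hdiv k (by omega)
  · have : Set.range (fun g : G => (-(k : ℤ)) • g) = Set.range (k • · : G → G) := by
      rw [← (Equiv.neg G).surjective.range_comp]
      simp [Function.comp_def]
    rw [this]
    exact hdiv k (by omega)

end

theorem dual_of_fg_free_cochain_complex_is_proper_general
    {G : Type*} [AddCommGroup G] [TopologicalSpace G]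
    [PolishSpace G]
    (hdcp : ∀ k : ℕ, 0 < k → IsClosed {g : G | ∃ x : G, k • x = g})
    (A : ℤ → Type*) [∀ n, AddCommGroup (A n)]
    [∀ n, Module.Free ℤ (A n)] [∀ n, Module.Finite ℤ (A n)]
    (δ : ∀ n : ℤ, A n →+ A (n + 1)) :
    ∀ n : ℤ,
      IsClosed {z : {f : A n → G // ∀ a b : A n, f (a + b) = f a + f b} |
        ∃ w : A (n + 1) →+ G, ∀ a : A n, z.1 a = w (δ n a)} := by
  intro n
  obtain ⟨m, snf⟩ := (LinearMap.range (δ n).toIntLinearMap).smithNormalForm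
    (Module.Free.chooseBasis ℤ (A (n + 1)))
  choose x hx using fun i => (snf.bN i).2
  have hset : {z : {f : A n → G // ∀ a b : A n, f (a + b) = f a + f b} |
        ∃ w : A (n + 1) →+ G, ∀ a : A n, z.1 a = w (δ n a)} =
      Subtype.val ⁻¹' (Set.pi {u | δ n u = 0} (fun _ => {0}) ∩
        ⋂ i, Function.eval (x i) ⁻¹' Set.range (snf.a i • · : G → G)) := by
    ext z
    simpa using snf.exists_addMonoidHom_comp_eq_iff hx (AddMonoidHom.mk' z.1 z.2)
  rw [hset]
  refine .preimage continuous_subtype_val (.inter ?_ (isClosed_iInter fun i => ?_))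
  · exact isClosed_set_pi fun _ _ => isClosed_singleton
  · exact (isClosed_range_zsmul hdcp (snf.a_ne_zero i)).preimage (continuous_apply _)

theorem dual_of_fg_free_cochain_complex_is_proper
    {G : Type*} [AddCommGroup G] [TopologicalSpace G] [IsTopologicalAddGroup G]
    [PolishSpace G]
    (hdcp : ∀ k : ℕ, 0 < k → IsClosed {g : G | ∃ x : G, k • x = g})
    (A : ℤ → Type*) [∀ n, AddCommGroup (A n)]
    [∀ n, Module.Free ℤ (A n)] [∀ n, Module.Finite ℤ (A n)]
    (δ : ∀ n : ℤ, A n →+ A (n + 1))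
    (hδδ : ∀ (n : ℤ) (x : A n), δ (n + 1) (δ n x) = 0) :
    ∀ n : ℤ,
      IsClosed {z : {f : A n → G // ∀ a b : A n, f (a + b) = f a + f b} |
        ∃ w : A (n + 1) →+ G, ∀ a : A n, z.1 a = w (δ n a)} :=
  dual_of_fg_free_cochain_complex_is_proper_general hdcp A δ
end
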